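/- arXiv:1006.4916 — 5 statements merged into one kernel-verified Lean document; each statement's English description precedes it below -/
import Mathlib

section
/- Fix r > 0. Let μ, g : [0,∞) → [0,∞) be continuously differentiable bounded functions with μ(0) = g(0) = 0 and μ(σ) > 0, g(σ) > 0 for all σ > 0, let b ≥ 0, and let D, s_in : [0,r] → [0,∞) be measurable and bounded. Suppose (x,s) and (ξ,σ) are two continuous functions on [0,r] with x(t), ξ(t) > 0 and s(t), σ(t) > 0 for all t, each satisfying the integral form of the single-species chemostat equations: x(t) = x(0) + ∫₀ᵗ (μ(s(τ)) − D(τ) − b)x(τ)dτ, s(t) = s(0) + ∫₀ᵗ [D(τ)(s_in(τ) − s(τ)) − g(s(τ))x(τ)]dτ (and similarly for (ξ,σ)). If s(t) = σ(t) for all t ∈ [0,r], then x(0) = ξ(0). In other words, the single-species chemostat is strongly observable in time r for every r > 0. -/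
/-!
Along a common output `s = σ` the two substrate equations have the same left-hand side,
so subtracting them gives `∫₀ᵗ g(s)(ξ - x) = 0` for every `t ∈ [0, r]`. Differentiating at
`t = 0` yields `g(s(0)) (ξ(0) - x(0)) = 0`, and `g(s(0)) > 0` because `s(0) > 0`.
-/

open Set MeasureTheory
open scoped Topology

def substrateRate (D sIn g x s : ℝ → ℝ) (τ : ℝ) : ℝ :=
  D τ * (sIn τ - s τ) - g (s τ) * x τ

lemma substrateRate_sub_substrateRate (D sIn g x ξ s : ℝ → ℝ) (τ : ℝ) :
    substrateRate D sIn g x s τ - substrateRate D sIn g ξ s τ = g (s τ) * (ξ τ - x τ) := by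
  unfold substrateRate
  ring

lemma exists_abs_le_of_nonneg_of_le {S : Set ℝ} {f : ℝ → ℝ} (h0 : ∀ t ∈ S, 0 ≤ f t)
    (hM : ∃ M, ∀ t ∈ S, f t ≤ M) : ∃ M, ∀ t ∈ S, |f t| ≤ M := by
  obtain ⟨M, hM⟩ := hM
  exact ⟨M, fun t ht => (abs_of_nonneg (h0 t ht)).trans_le (hM t ht)⟩

lemma integrableOn_Icc_of_measurable_of_abs_le {a b M : ℝ} {f : ℝ → ℝ}
    (hf : Measurable f) (hM : ∀ t ∈ Icc a b, |f t| ≤ M) : IntegrableOn f (Icc a b) :=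
  Measure.integrableOn_of_bounded measure_Icc_lt_top.ne hf.aestronglyMeasurable
    ((ae_restrict_iff' measurableSet_Icc).2 (ae_of_all _ hM))

lemma integrableOn_substrateRate {a b : ℝ} {T : Set ℝ} {D sIn g x s : ℝ → ℝ}
    (hD : Measurable D) (hsIn : Measurable sIn)
    (hDbdd : ∃ M, ∀ t ∈ Icc a b, |D t| ≤ M)
    (hsInbdd : ∃ M, ∀ t ∈ Icc a b, |sIn t| ≤ M)
    (hg : ContinuousOn g T) (hx : ContinuousOn x (Icc a b))
    (hs : ContinuousOn s (Icc a b)) (hsT : MapsTo s (Icc a b) T) :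
    IntegrableOn (substrateRate D sIn g x s) (Icc a b) := by
  obtain ⟨MD, hMD⟩ := hDbdd
  obtain ⟨MI, hMI⟩ := hsInbdd
  have hdil : IntegrableOn (fun τ => sIn τ - s τ) (Icc a b) :=
    (integrableOn_Icc_of_measurable_of_abs_le hsIn hMI).sub hs.integrableOn_Icc
  have hdilution : IntegrableOn (fun τ => D τ * (sIn τ - s τ)) (Icc a b) :=
    hdil.bdd_mul hD.aestronglyMeasurable.restrict
      ((ae_restrict_iff' measurableSet_Icc).2 (ae_of_all _ hMD))
  exact hdilution.sub ((hg.comp hs hsT).mul hx).integrableOn_Icc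

/-- Fundamental theorem of calculus at the left endpoint. -/
lemma ContinuousOn.eq_zero_left_of_forall_intervalIntegral_eq_zero {a b : ℝ} (hab : a < b)
    {h : ℝ → ℝ} (hh : ContinuousOn h (Icc a b))
    (hint : ∀ t ∈ Icc a b, ∫ τ in a..t, h τ = 0) :
    h a = 0 := by
  have ha : a ∈ Icc a b := left_mem_Icc.2 hab.le
  have hIcc : Icc a b ∈ 𝓝[>] a := Icc_mem_nhdsGT hab
  have hderiv : HasDerivWithinAt (fun u => ∫ τ in a..u, h τ) (h a) (Icc a b) a :=
    (intervalIntegral.integral_hasDerivWithinAt_right (t := Ioi a) .refl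
      ⟨Icc a b, hIcc, (hh.aemeasurable measurableSet_Icc).aestronglyMeasurable⟩
      ((hh a ha).mono_of_mem_nhdsWithin hIcc)).mono Icc_subset_Ici_self
  have hzero : HasDerivWithinAt (fun u => ∫ τ in a..u, h τ) 0 (Icc a b) a :=
    (hasDerivWithinAt_const a (Icc a b) 0).congr hint (hint a ha)
  exact (uniqueDiffOn_Icc hab a ha).eq_deriv _ hderiv hzero

theorem single_species_chemostat_strongly_observable_general
    (r : ℝ) (hr : 0 < r)
    (g : ℝ → ℝ)
    (hgC : ContDiffOn ℝ 1 g (Ici 0))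
    (hgpos : ∀ u > (0:ℝ), 0 < g u)
    (D sIn : ℝ → ℝ)
    (hDmeas : Measurable D) (hsInmeas : Measurable sIn)
    (hDnn : ∀ t ∈ Icc 0 r, 0 ≤ D t) (hsInnn : ∀ t ∈ Icc 0 r, 0 ≤ sIn t)
    (hDbdd : ∃ M, ∀ t ∈ Icc 0 r, D t ≤ M) (hsInbdd : ∃ M, ∀ t ∈ Icc 0 r, sIn t ≤ M)
    (x s ξ σ : ℝ → ℝ)
    (hxC : ContinuousOn x (Icc 0 r)) (hsC : ContinuousOn s (Icc 0 r))
    (hξC : ContinuousOn ξ (Icc 0 r))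
    (hspos : ∀ t ∈ Icc 0 r, 0 < s t)
    (hseq : ∀ t ∈ Icc 0 r,
      s t = s 0 + ∫ τ in (0:ℝ)..t, (D τ * (sIn τ - s τ) - g (s τ) * x τ))
    (hσeq : ∀ t ∈ Icc 0 r,
      σ t = σ 0 + ∫ τ in (0:ℝ)..t, (D τ * (sIn τ - σ τ) - g (σ τ) * ξ τ))
    (hout : ∀ t ∈ Icc 0 r, s t = σ t) :
    x 0 = ξ 0 := by
  have h0 : (0:ℝ) ∈ Icc 0 r := left_mem_Icc.2 hr.le
  have hsT : MapsTo s (Icc 0 r) (Ici 0) := fun t ht => (hspos t ht).le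
  have hrate : ∀ y, ContinuousOn y (Icc 0 r) → ∀ t ∈ Icc 0 r,
      IntervalIntegrable (substrateRate D sIn g y s) volume 0 t := fun y hy t ht =>
    (intervalIntegrable_iff_integrableOn_Icc_of_le ht.1).2 <|
      (integrableOn_substrateRate hDmeas hsInmeas (exists_abs_le_of_nonneg_of_le hDnn hDbdd)
        (exists_abs_le_of_nonneg_of_le hsInnn hsInbdd) hgC.continuousOn hy hsC hsT).mono_set
        (Icc_subset_Icc_right ht.2)
  have hσeq' :
      ∀ t ∈ Icc 0 r, s t = s 0 + ∫ τ in (0:ℝ)..t, substrateRate D sIn g ξ s τ := by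
    intro t ht
    rw [hout t ht, hout 0 h0, hσeq t ht]
    congr 1
    refine intervalIntegral.integral_congr fun τ hτ => ?_
    rw [uIcc_of_le ht.1] at hτ
    simp only [substrateRate, hout τ (Icc_subset_Icc_right ht.2 hτ)]
  have hint : ∀ t ∈ Icc 0 r, ∫ τ in (0:ℝ)..t, g (s τ) * (ξ τ - x τ) = 0 := by
    intro t ht
    have hseq' : s t = s 0 + ∫ τ in (0:ℝ)..t, substrateRate D sIn g x s τ := hseq t ht
    simp_rw [← substrateRate_sub_substrateRate D sIn g x ξ s]
    rw [intervalIntegral.integral_sub (hrate x hxC t ht) (hrate ξ hξC t ht)]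
    linarith [hσeq' t ht]
  have hgs : ContinuousOn (fun τ => g (s τ)) (Icc 0 r) := hgC.continuousOn.comp hsC hsT
  have hprod : g (s 0) * (ξ 0 - x 0) = 0 :=
    (hgs.mul (hξC.sub hxC)).eq_zero_left_of_forall_intervalIntegral_eq_zero hr hint
  have hξx : ξ 0 - x 0 = 0 := (mul_eq_zero.1 hprod).resolve_left (hgpos _ (hspos 0 h0)).ne'
  linarith

/-- The single-species chemostat is strongly observable in time `r` for every `r > 0`:
two positive solutions on `[0,r]` (in integral form) with the same inputs and identical
substrate output must have the same initial biomass. -/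
theorem single_species_chemostat_strongly_observable
    (r : ℝ) (hr : 0 < r)
    (μ g : ℝ → ℝ)
    (hμC : ContDiffOn ℝ 1 μ (Ici 0)) (hgC : ContDiffOn ℝ 1 g (Ici 0))
    (hμbdd : ∃ M, ∀ u ≥ (0:ℝ), μ u ≤ M) (hgbdd : ∃ M, ∀ u ≥ (0:ℝ), g u ≤ M)
    (hμnn : ∀ u ≥ (0:ℝ), 0 ≤ μ u) (hgnn : ∀ u ≥ (0:ℝ), 0 ≤ g u)
    (hμ0 : μ 0 = 0) (hg0 : g 0 = 0)
    (hμpos : ∀ u > (0:ℝ), 0 < μ u) (hgpos : ∀ u > (0:ℝ), 0 < g u)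
    (b : ℝ) (hb : 0 ≤ b)
    (D sIn : ℝ → ℝ)
    (hDmeas : Measurable D) (hsInmeas : Measurable sIn)
    (hDnn : ∀ t ∈ Icc 0 r, 0 ≤ D t) (hsInnn : ∀ t ∈ Icc 0 r, 0 ≤ sIn t)
    (hDbdd : ∃ M, ∀ t ∈ Icc 0 r, D t ≤ M) (hsInbdd : ∃ M, ∀ t ∈ Icc 0 r, sIn t ≤ M)
    (x s ξ σ : ℝ → ℝ)
    (hxC : ContinuousOn x (Icc 0 r)) (hsC : ContinuousOn s (Icc 0 r))
    (hξC : ContinuousOn ξ (Icc 0 r)) (hσC : ContinuousOn σ (Icc 0 r))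
    (hxpos : ∀ t ∈ Icc 0 r, 0 < x t) (hspos : ∀ t ∈ Icc 0 r, 0 < s t)
    (hξpos : ∀ t ∈ Icc 0 r, 0 < ξ t) (hσpos : ∀ t ∈ Icc 0 r, 0 < σ t)
    (hxeq : ∀ t ∈ Icc 0 r, x t = x 0 + ∫ τ in (0:ℝ)..t, (μ (s τ) - D τ - b) * x τ)
    (hseq : ∀ t ∈ Icc 0 r,
      s t = s 0 + ∫ τ in (0:ℝ)..t, (D τ * (sIn τ - s τ) - g (s τ) * x τ))
    (hξeq : ∀ t ∈ Icc 0 r, ξ t = ξ 0 + ∫ τ in (0:ℝ)..t, (μ (σ τ) - D τ - b) * ξ τ)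
    (hσeq : ∀ t ∈ Icc 0 r,
      σ t = σ 0 + ∫ τ in (0:ℝ)..t, (D τ * (sIn τ - σ τ) - g (σ τ) * ξ τ))
    (hout : ∀ t ∈ Icc 0 r, s t = σ t) :
    x 0 = ξ 0 :=
  single_species_chemostat_strongly_observable_general r hr g hgC hgpos D sIn hDmeas hsInmeas hDnn
    hsInnn hDbdd hsInbdd x s ξ σ hxC hsC hξC hspos hseq hσeq hout
end

section
/- Fix r > 0. Let μ, g : [0,∞) → [0,∞) be continuously differentiable bounded functions with μ(0) = g(0) = 0 and μ(σ) > 0, g(σ) > 0 for all σ > 0, let b ≥ 0, and let D, s_in : [0,r] → [0,∞) be measurable and bounded. Let (x,s) be a solution of the single-species chemostat on [0,r] with x(t) > 0 and s(t) > 0 for all t. Define p(t) := s(t) − s(0) − ∫₀ᵗ D(w)(s_in(w) − s(w))dw and q(t) := −∫₀ᵗ g(s(ρ)) exp(∫₀^ρ (μ(s(w)) − D(w) − b)dw)dρ. Then q(t) < 0 for all t ∈ (0,r], so ∫₀ʳ q²(t)dt > 0, and the dead-beat reconstruction formula holds: x(r) = exp(∫₀ʳ (μ(s(w)) − D(w)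 − b)dw) · (∫₀ʳ p(t)q(t)dt) / (∫₀ʳ q²(t)dt). -/
/-!
On `[0, r]` the biomass equation is linear in `x` with the merely integrable rate
`f = μ(s) - D - b`, so `x(t) = x(0) exp (∫₀ᵗ f)`: the product `x ⬝ exp (-∫₀ᵗ f)` is absolutely
continuous with vanishing derivative almost everywhere. Substituting this into the substrate
equation turns the known signal `p` into `x(0) ⬝ q`, where `q` is strictly negative on `(0, r]`
because `g ∘ s > 0`; hence `x(0) = ∫ p q / ∫ q²`, and `x(r) = x(0) exp (∫₀ʳ f)`.
-/

open Real Set MeasureTheory Filter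

theorem LocallyLipschitz.comp_absolutelyContinuousOnInterval {E Y : Type*}
    [SeminormedAddCommGroup E] [PseudoMetricSpace Y] {φ : E → Y} {f : ℝ → E} {a b : ℝ}
    (hφ : LocallyLipschitz φ) (hf : AbsolutelyContinuousOnInterval f a b) :
    AbsolutelyContinuousOnInterval (φ ∘ f) a b := by
  obtain ⟨K, hK⟩ := LocallyLipschitzOn.exists_lipschitzOnWith_of_compact
    (isCompact_uIcc.image_of_continuousOn hf.continuousOn) hφ.locallyLipschitzOn
  unfold AbsolutelyContinuousOnInterval at hf ⊢
  refine squeeze_zero' (Eventually.of_forall fun _ ↦ Finset.sum_nonneg fun _ _ ↦ dist_nonneg)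
    ?_ (by simpa using hf.const_mul (K : ℝ))
  filter_upwards [mem_inf_of_right (mem_principal_self _)] with E hE
  rw [Finset.mul_sum]
  exact Finset.sum_le_sum fun i hi ↦ hK.dist_le_mul _ (mem_image_of_mem f (hE.1 i hi).1)
    _ (mem_image_of_mem f (hE.1 i hi).2)

theorem eq_mul_exp_integral_of_eq_add_integral_mul {f x : ℝ → ℝ} {a b : ℝ}
    (hf : IntervalIntegrable f volume a b) (hx : ContinuousOn x (uIcc a b))
    (hxeq : ∀ t ∈ uIcc a b, x t = x a + ∫ τ in a..t, f τ * x τ) :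
    ∀ t ∈ uIcc a b, x t = x a * exp (∫ τ in a..t, f τ) := by
  set F := fun t ↦ ∫ τ in a..t, f τ
  set X := fun t ↦ x a + ∫ τ in a..t, f τ * x τ
  have ha : a ∈ uIcc a b := left_mem_uIcc
  have hfx : IntervalIntegrable (fun τ ↦ f τ * x τ) volume a b := hf.mul_continuousOn hx
  have hF : AbsolutelyContinuousOnInterval F a b :=
    hf.absolutelyContinuousOnInterval_intervalIntegral ha
  have hX : AbsolutelyContinuousOnInterval X a b :=
    (contDiffOn_const (c := x a)).absolutelyContinuousOnInterval.fun_add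
      (hfx.absolutelyContinuousOnInterval_intervalIntegral ha)
  have hE : AbsolutelyContinuousOnInterval (fun t ↦ exp (-F t)) a b :=
    contDiff_exp.locallyLipschitz.comp_absolutelyContinuousOnInterval hF.neg
  -- The a.e. derivative `f x exp (-F) - X f exp (-F)` of `X * exp (-F)` vanishes because `X = x`.
  obtain ⟨C, hC⟩ := (hX.fun_mul hE).const_of_ae_hasDerivAt_zero <| by
    filter_upwards [hf.ae_hasDerivAt_integral, hfx.ae_hasDerivAt_integral] with t hFt hXt ht
    have h : HasDerivAt (fun u ↦ X u * exp (-F u))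
        (f t * x t * exp (-F t) + X t * (exp (-F t) * -f t)) t :=
      ((hXt ht a ha).const_add (x a)).mul (hFt ht a ha).neg.exp
    rw [show X t = x t from (hxeq t ht).symm] at h
    exact h.congr_deriv (by ring)
  intro t ht
  have hconst : X t * exp (-F t) = x a := by
    simpa [X, F, ← hC a ha] using hC t ht
  calc x t = X t * exp (-F t) * exp (F t) := by
        rw [mul_assoc, ← exp_add, neg_add_cancel, exp_zero, mul_one, hxeq t ht]
    _ = x a * exp (F t) := by rw [hconst]

theorem Measurable.intervalIntegrable_of_norm_le {f : ℝ → ℝ} {a b M : ℝ} (hf : Measurable f)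
    (hM : ∀ t ∈ uIcc a b, ‖f t‖ ≤ M) : IntervalIntegrable f volume a b :=
  (intervalIntegrable_const (c := M)).mono_fun' hf.aestronglyMeasurable.restrict <|
    ae_restrict_of_forall_mem measurableSet_uIoc fun t ht ↦ hM t (uIoc_subset_uIcc ht)

theorem IntervalIntegrable.bdd_mul {f g : ℝ → ℝ} {a b M : ℝ}
    (hg : IntervalIntegrable g volume a b) (hf : Measurable f)
    (hM : ∀ t ∈ uIcc a b, ‖f t‖ ≤ M) : IntervalIntegrable (fun t ↦ f t * g t) volume a b := by
  rw [intervalIntegrable_iff] at hg ⊢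
  exact hg.bdd_mul hf.aestronglyMeasurable.restrict <|
    ae_restrict_of_forall_mem measurableSet_uIoc fun t ht ↦ hM t (uIoc_subset_uIcc ht)

theorem sub_sub_integral_eq_mul_neg_integral_mul_exp {A k x f s : ℝ → ℝ} {a b : ℝ}
    (hA : IntervalIntegrable A volume a b) (hk : ContinuousOn k (uIcc a b))
    (hx : ContinuousOn x (uIcc a b))
    (hxexp : ∀ t ∈ uIcc a b, x t = x a * exp (∫ w in a..t, f w))
    (hs : ∀ t ∈ uIcc a b, s t = s a + ∫ τ in a..t, (A τ - k τ * x τ)) :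
    ∀ t ∈ uIcc a b,
      s t - s a - ∫ w in a..t, A w = x a * -∫ ρ in a..t, k ρ * exp (∫ w in a..ρ, f w) := by
  intro t ht
  have hsub : uIcc a t ⊆ uIcc a b := uIcc_subset_uIcc_left ht
  have hkx : ∫ w in a..t, k w * x w = x a * ∫ ρ in a..t, k ρ * exp (∫ w in a..ρ, f w) := by
    rw [← intervalIntegral.integral_const_mul]
    refine intervalIntegral.integral_congr fun w hw ↦ ?_
    simp only [hxexp w (hsub hw)]
    ring
  have hkx_int : IntervalIntegrable (fun w ↦ k w * x w) volume a t :=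
    ((hk.mul hx).mono hsub).intervalIntegrable
  rw [hs t ht, intervalIntegral.integral_sub (hA.mono_set hsub) hkx_int, hkx]
  ring

theorem intervalIntegral_pos_of_continuousOn_of_pos {G : ℝ → ℝ} {a b t : ℝ}
    (hG : ContinuousOn G (uIcc a b)) (hpos : ∀ ρ ∈ uIcc a b, 0 < G ρ) (hat : a < t)
    (ht : t ∈ uIcc a b) : 0 < ∫ ρ in a..t, G ρ := by
  have hsub : uIcc a t ⊆ uIcc a b := uIcc_subset_uIcc_left ht
  exact intervalIntegral.intervalIntegral_pos_of_pos_on (hG.mono hsub).intervalIntegrable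
    (fun ρ hρ ↦ hpos ρ (hsub (Icc_subset_uIcc (Ioo_subset_Icc_self hρ)))) hat

theorem eq_integral_mul_div_integral_sq {p q : ℝ → ℝ} {a b c : ℝ}
    (hpq : ∀ t ∈ uIcc a b, p t = c * q t) (hq : ∫ t in a..b, q t ^ 2 ≠ 0) :
    c = (∫ t in a..b, p t * q t) / ∫ t in a..b, q t ^ 2 := by
  have h : ∫ t in a..b, p t * q t = c * ∫ t in a..b, q t ^ 2 := by
    rw [← intervalIntegral.integral_const_mul]
    refine intervalIntegral.integral_congr fun t ht ↦ ?_
    simp only [hpq t ht]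
    ring
  rw [h, mul_div_assoc, div_self hq, mul_one]

theorem single_species_chemostat_deadbeat_formula_general
    (r : ℝ) (hr : 0 < r)
    (μ g : ℝ → ℝ)
    (hμC : ContDiffOn ℝ 1 μ (Ici 0)) (hgC : ContDiffOn ℝ 1 g (Ici 0))
    (hgpos : ∀ u > (0:ℝ), 0 < g u)
    (b : ℝ)
    (D sIn : ℝ → ℝ)
    (hDmeas : Measurable D) (hsInmeas : Measurable sIn)
    (hDnn : ∀ t ∈ Icc 0 r, 0 ≤ D t) (hsInnn : ∀ t ∈ Icc 0 r, 0 ≤ sIn t)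
    (hDbdd : ∃ M, ∀ t ∈ Icc 0 r, D t ≤ M) (hsInbdd : ∃ M, ∀ t ∈ Icc 0 r, sIn t ≤ M)
    (x s : ℝ → ℝ)
    (hxC : ContinuousOn x (Icc 0 r)) (hsC : ContinuousOn s (Icc 0 r))
    (hspos : ∀ t ∈ Icc 0 r, 0 < s t)
    (hxeq : ∀ t ∈ Icc 0 r, x t = x 0 + ∫ τ in (0:ℝ)..t, (μ (s τ) - D τ - b) * x τ)
    (hseq : ∀ t ∈ Icc 0 r,
      s t = s 0 + ∫ τ in (0:ℝ)..t, (D τ * (sIn τ - s τ) - g (s τ) * x τ))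
    (p q : ℝ → ℝ)
    (hp : ∀ t ∈ Icc 0 r,
      p t = s t - s 0 - ∫ w in (0:ℝ)..t, D w * (sIn w - s w))
    (hq : ∀ t ∈ Icc 0 r,
      q t = -∫ ρ in (0:ℝ)..t,
        g (s ρ) * Real.exp (∫ w in (0:ℝ)..ρ, (μ (s w) - D w - b))) :
    (∀ t ∈ Ioc 0 r, q t < 0) ∧
    (0 < ∫ t in (0:ℝ)..r, (q t) ^ 2) ∧
    x r = Real.exp (∫ w in (0:ℝ)..r, (μ (s w) - D w - b)) *
      ((∫ t in (0:ℝ)..r, p t * q t) / ∫ t in (0:ℝ)..r, (q t) ^ 2) := by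
  rw [← uIcc_of_le hr.le] at hDnn hsInnn hDbdd hsInbdd hxC hsC hspos hxeq hseq hp hq
  obtain ⟨MD, hMD⟩ := hDbdd
  obtain ⟨MsIn, hMsIn⟩ := hsInbdd
  have hDb : ∀ t ∈ uIcc 0 r, ‖D t‖ ≤ MD := fun t ht ↦
    (norm_of_nonneg (hDnn t ht)).trans_le (hMD t ht)
  have hsInb : ∀ t ∈ uIcc 0 r, ‖sIn t‖ ≤ MsIn := fun t ht ↦
    (norm_of_nonneg (hsInnn t ht)).trans_le (hMsIn t ht)
  have hs0 : MapsTo s (uIcc 0 r) (Ici 0) := fun t ht ↦ (hspos t ht).le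
  have hgs : ContinuousOn (fun t ↦ g (s t)) (uIcc 0 r) := hgC.continuousOn.comp hsC hs0
  have hf : IntervalIntegrable (fun w ↦ μ (s w) - D w - b) volume 0 r :=
    ((hμC.continuousOn.comp hsC hs0).intervalIntegrable.sub
      (hDmeas.intervalIntegrable_of_norm_le hDb)).sub intervalIntegrable_const
  have hx := eq_mul_exp_integral_of_eq_add_integral_mul hf hxC hxeq
  set G := fun ρ ↦ g (s ρ) * exp (∫ w in (0:ℝ)..ρ, (μ (s w) - D w - b))
  have hG : ContinuousOn G (uIcc 0 r) := hgs.mul <| continuous_exp.comp_continuousOn <|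
    intervalIntegral.continuousOn_primitive_interval' hf left_mem_uIcc
  have hGpos : ∀ ρ ∈ uIcc 0 r, 0 < G ρ := fun ρ hρ ↦ mul_pos (hgpos _ (hspos ρ hρ)) (exp_pos _)
  have hq_neg : ∀ t ∈ Ioc 0 r, q t < 0 := fun t ht ↦ by
    have htr : t ∈ uIcc 0 r := Icc_subset_uIcc (Ioc_subset_Icc_self ht)
    rw [hq t htr, neg_lt_zero]
    exact intervalIntegral_pos_of_continuousOn_of_pos hG hGpos ht.1 htr
  have hq_sq : 0 < ∫ t in (0:ℝ)..r, q t ^ 2 := by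
    have hqC : ContinuousOn q (uIcc 0 r) :=
      (intervalIntegral.continuousOn_primitive_interval' hG.intervalIntegrable
        left_mem_uIcc).neg.congr hq
    exact intervalIntegral.intervalIntegral_pos_of_pos_on (hqC.pow 2).intervalIntegrable
      (fun t ht ↦ sq_pos_of_neg (hq_neg t (Ioo_subset_Ioc_self ht))) hr
  have hpq : ∀ t ∈ uIcc 0 r, p t = x 0 * q t := fun t ht ↦ by
    rw [hp t ht, hq t ht, sub_sub_integral_eq_mul_neg_integral_mul_exp
      (((hsInmeas.intervalIntegrable_of_norm_le hsInb).sub hsC.intervalIntegrable).bdd_mul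
        hDmeas hDb) hgs hxC hx hseq t ht]
  refine ⟨hq_neg, hq_sq, ?_⟩
  rw [← eq_integral_mul_div_integral_sq hpq hq_sq.ne', hx r right_mem_uIcc, mul_comm]

/-- The dead-beat reconstruction formula for the single-species chemostat:
`q(t) < 0` on `(0,r]`, hence `∫₀ʳ q² > 0`, and
`x(r) = exp(∫₀ʳ (μ(s)−D−b)) ⬝ (∫₀ʳ p q) / (∫₀ʳ q²)`. -/
theorem single_species_chemostat_deadbeat_formula
    (r : ℝ) (hr : 0 < r)
    (μ g : ℝ → ℝ)
    (hμC : ContDiffOn ℝ 1 μ (Ici 0)) (hgC : ContDiffOn ℝ 1 g (Ici 0))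
    (hμbdd : ∃ M, ∀ u ≥ (0:ℝ), μ u ≤ M) (hgbdd : ∃ M, ∀ u ≥ (0:ℝ), g u ≤ M)
    (hμnn : ∀ u ≥ (0:ℝ), 0 ≤ μ u) (hgnn : ∀ u ≥ (0:ℝ), 0 ≤ g u)
    (hμ0 : μ 0 = 0) (hg0 : g 0 = 0)
    (hμpos : ∀ u > (0:ℝ), 0 < μ u) (hgpos : ∀ u > (0:ℝ), 0 < g u)
    (b : ℝ) (hb : 0 ≤ b)
    (D sIn : ℝ → ℝ)
    (hDmeas : Measurable D) (hsInmeas : Measurable sIn)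
    (hDnn : ∀ t ∈ Icc 0 r, 0 ≤ D t) (hsInnn : ∀ t ∈ Icc 0 r, 0 ≤ sIn t)
    (hDbdd : ∃ M, ∀ t ∈ Icc 0 r, D t ≤ M) (hsInbdd : ∃ M, ∀ t ∈ Icc 0 r, sIn t ≤ M)
    (x s : ℝ → ℝ)
    (hxC : ContinuousOn x (Icc 0 r)) (hsC : ContinuousOn s (Icc 0 r))
    (hxpos : ∀ t ∈ Icc 0 r, 0 < x t) (hspos : ∀ t ∈ Icc 0 r, 0 < s t)
    (hxeq : ∀ t ∈ Icc 0 r, x t = x 0 + ∫ τ in (0:ℝ)..t, (μ (s τ) - D τ - b) * x τ)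
    (hseq : ∀ t ∈ Icc 0 r,
      s t = s 0 + ∫ τ in (0:ℝ)..t, (D τ * (sIn τ - s τ) - g (s τ) * x τ))
    (p q : ℝ → ℝ)
    (hp : ∀ t ∈ Icc 0 r,
      p t = s t - s 0 - ∫ w in (0:ℝ)..t, D w * (sIn w - s w))
    (hq : ∀ t ∈ Icc 0 r,
      q t = -∫ ρ in (0:ℝ)..t,
        g (s ρ) * Real.exp (∫ w in (0:ℝ)..ρ, (μ (s w) - D w - b))) :
    (∀ t ∈ Ioc 0 r, q t < 0) ∧
    (0 < ∫ t in (0:ℝ)..r, (q t) ^ 2) ∧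
    x r = Real.exp (∫ w in (0:ℝ)..r, (μ (s w) - D w - b)) *
      ((∫ t in (0:ℝ)..r, p t * q t) / ∫ t in (0:ℝ)..r, (q t) ^ 2) :=
  single_species_chemostat_deadbeat_formula_general r hr μ g hμC hgC hgpos b D sIn hDmeas hsInmeas
    hDnn hsInnn hDbdd hsInbdd x s hxC hsC hspos hxeq hseq p q hp hq
end

section
/- Let μ₁, μ₂, g₁, g₂ : [0,∞) → [0,∞) be continuously differentiable bounded functions vanishing at 0 and positive on (0,∞), b₁, b₂ ≥ 0, and let (x₁*, x₂*, s*) be a coexistence equilibrium for constant inputs D* > 0, s_in > s*: μᵢ(s*) − bᵢ = D* for i = 1,2 and D*(s_in − s*) = g₁(s*)x₁* + g₂(s*)x₂*. Let G₁, G₂, G₃ be arbitrary continuous functions (the observer correction gains). For any z₀ = (z₀₁, z₀₂) with z₀₁, z₀₂ > 0 satisfying D*(s_in − s*) = g₁(s*)z₀₁ + g₂(s*)z₀₂, the constant functions z₁(t) ≡ z₀₁, z₂(t) ≡ z₀₂, ξ(t) ≡ s* solve the smooth observer system ż₁ = (μ₁(s) − D − b₁)z₁ + (s − ξ)G₁(s,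 ξ, z₁, z₂, D, s_in), ż₂ = (μ₂(s) − D − b₂)z₂ + (s − ξ)G₂(s, ξ, z₁, z₂, D, s_in), ξ̇ = D(s_in − s) − g₁(s)z₁ − g₂(s)z₂ + (s − ξ)G₃(s, ξ, z₁, z₂, D, s_in) along the plant trajectory s(t) ≡ s*, D(t) ≡ D*, s_in(t) ≡ s_in. Consequently, if x₀ = (x₀₁, x₀₂) with x₀₁, x₀₂ > 0 also satisfies D*(s_in − s*) = g₁(s*)x₀₁ + g₂(s*)x₀₂ and x₀ ≠ z₀, then the corresponding plant solution is x(t) ≡ x₀, s(t) ≡ s*, and the observer error satisfies |z(t) − x(t)| = |z₀ − x₀| > 0 for all t ≥ 0. -/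
/-!
On a coexistence equilibrium both growth rates `μᵢ(s*) - D* - bᵢ` vanish, so every state
`(z₁, z₂, s*)` on the line `D*(s_in - s*) = g₁(s*) z₁ + g₂(s*) z₂` is an equilibrium of the plant.
Along the constant output `s ≡ s*` an observer initialised at `ξ = s*` sees no output error, so its
correction terms `(s - ξ) Gᵢ` vanish whatever the gains: it is also at rest, and two distinct points
of that line keep their distance forever.
-/

open Real Set MeasureTheory

theorem hasDerivAt_const_of_eq_zero {𝕜 F : Type*} [NontriviallyNormedField 𝕜]
    [NormedAddCommGroup F] [NormedSpace 𝕜 F] {c v : F} (hv : v = 0) (t : 𝕜) :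
    HasDerivAt (fun _ : 𝕜 => c) v t :=
  hv ▸ hasDerivAt_const t c

theorem no_smooth_observer_under_coexistence_general
    (μ₁ μ₂ g₁ g₂ : ℝ → ℝ)
    (b₁ b₂ : ℝ)
    (Ds sIn : ℝ)
    (ss : ℝ)
    (heq₁ : μ₁ ss - b₁ = Ds) (heq₂ : μ₂ ss - b₂ = Ds)
    (G₁ G₂ G₃ : ℝ → ℝ → ℝ → ℝ → ℝ → ℝ → ℝ) :
    ∀ z₀₁ > (0:ℝ), ∀ z₀₂ > (0:ℝ),
      Ds * (sIn - ss) = g₁ ss * z₀₁ + g₂ ss * z₀₂ →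
      -- the constant functions `z₁ ≡ z₀₁`, `z₂ ≡ z₀₂`, `ξ ≡ s*` solve the observer (3.20)
      -- along the plant trajectory `s ≡ s*`, `D ≡ D*`, `s_in ≡ s_in`:
      ((∀ t : ℝ, HasDerivAt (fun _ : ℝ => z₀₁)
          ((μ₁ ss - Ds - b₁) * z₀₁ + (ss - ss) * G₁ ss ss z₀₁ z₀₂ Ds sIn) t) ∧
       (∀ t : ℝ, HasDerivAt (fun _ : ℝ => z₀₂)
          ((μ₂ ss - Ds - b₂) * z₀₂ + (ss - ss) * G₂ ss ss z₀₁ z₀₂ Ds sIn) t) ∧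
       (∀ t : ℝ, HasDerivAt (fun _ : ℝ => ss)
          (Ds * (sIn - ss) - g₁ ss * z₀₁ - g₂ ss * z₀₂ +
            (ss - ss) * G₃ ss ss z₀₁ z₀₂ Ds sIn) t)) ∧
      -- consequently, for every admissible plant initial state `x₀ ≠ z₀`, the plant solution
      -- is constant and the estimation error stays equal to its (nonzero) initial value:
      (∀ x₀₁ > (0:ℝ), ∀ x₀₂ > (0:ℝ),
        Ds * (sIn - ss) = g₁ ss * x₀₁ + g₂ ss * x₀₂ → (x₀₁, x₀₂) ≠ (z₀₁, z₀₂) →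
        ((∀ t : ℝ, HasDerivAt (fun _ : ℝ => x₀₁) ((μ₁ ss - Ds - b₁) * x₀₁) t) ∧
         (∀ t : ℝ, HasDerivAt (fun _ : ℝ => x₀₂) ((μ₂ ss - Ds - b₂) * x₀₂) t) ∧
         (∀ t : ℝ, HasDerivAt (fun _ : ℝ => ss)
            (Ds * (sIn - ss) - g₁ ss * x₀₁ - g₂ ss * x₀₂) t)) ∧
        (∀ t : ℝ, t ≥ 0 →
          ‖((z₀₁, z₀₂) : ℝ × ℝ) - (x₀₁, x₀₂)‖ = ‖((z₀₁, z₀₂) : ℝ × ℝ) - (x₀₁, x₀₂)‖ ∧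
          0 < ‖((z₀₁, z₀₂) : ℝ × ℝ) - (x₀₁, x₀₂)‖)) := by
  have hrate₁ : μ₁ ss - Ds - b₁ = 0 := by linarith
  have hrate₂ : μ₂ ss - Ds - b₂ = 0 := by linarith
  have hsupply : ∀ y₁ y₂, Ds * (sIn - ss) = g₁ ss * y₁ + g₂ ss * y₂ →
      Ds * (sIn - ss) - g₁ ss * y₁ - g₂ ss * y₂ = 0 := fun _ _ h => by linarith
  intro z₀₁ _ z₀₂ _ hz
  refine ⟨⟨hasDerivAt_const_of_eq_zero (by simp [hrate₁]),
      hasDerivAt_const_of_eq_zero (by simp [hrate₂]),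
      hasDerivAt_const_of_eq_zero (by simp [hsupply _ _ hz])⟩, ?_⟩
  intro x₀₁ _ x₀₂ _ hx hne
  refine ⟨⟨hasDerivAt_const_of_eq_zero (by simp [hrate₁]),
      hasDerivAt_const_of_eq_zero (by simp [hrate₂]),
      hasDerivAt_const_of_eq_zero (hsupply _ _ hx)⟩, fun _ _ => ⟨rfl, ?_⟩⟩
  exact norm_pos_iff.mpr (sub_ne_zero.mpr (Ne.symm hne))

/-- Remark 3.4: under coexistence, any smooth observer of the correction form (3.20) admits
constant trajectories along the constant plant trajectory `s ≡ s*`, `D ≡ D*`, `s_in ≡ s_in`;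
any two admissible initial conditions on the equilibrium line give a constant, nonzero
estimation error. -/
theorem no_smooth_observer_under_coexistence
    (μ₁ μ₂ g₁ g₂ : ℝ → ℝ)
    (hμ₁C : ContDiffOn ℝ 1 μ₁ (Ici 0)) (hμ₂C : ContDiffOn ℝ 1 μ₂ (Ici 0))
    (hg₁C : ContDiffOn ℝ 1 g₁ (Ici 0)) (hg₂C : ContDiffOn ℝ 1 g₂ (Ici 0))
    (hμ₁bdd : ∃ M, ∀ u ≥ (0:ℝ), μ₁ u ≤ M) (hμ₂bdd : ∃ M, ∀ u ≥ (0:ℝ), μ₂ u ≤ M)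
    (hg₁bdd : ∃ M, ∀ u ≥ (0:ℝ), g₁ u ≤ M) (hg₂bdd : ∃ M, ∀ u ≥ (0:ℝ), g₂ u ≤ M)
    (hμ₁0 : μ₁ 0 = 0) (hμ₂0 : μ₂ 0 = 0) (hg₁0 : g₁ 0 = 0) (hg₂0 : g₂ 0 = 0)
    (hμ₁pos : ∀ u > (0:ℝ), 0 < μ₁ u) (hμ₂pos : ∀ u > (0:ℝ), 0 < μ₂ u)
    (hg₁pos : ∀ u > (0:ℝ), 0 < g₁ u) (hg₂pos : ∀ u > (0:ℝ), 0 < g₂ u)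
    (b₁ b₂ : ℝ) (hb₁ : 0 ≤ b₁) (hb₂ : 0 ≤ b₂)
    (Ds sIn : ℝ) (hDs : 0 < Ds)
    (x₁s x₂s ss : ℝ) (hx₁s : 0 < x₁s) (hx₂s : 0 < x₂s)
    (hss : 0 < ss) (hssIn : ss < sIn)
    (heq₁ : μ₁ ss - b₁ = Ds) (heq₂ : μ₂ ss - b₂ = Ds)
    (heq₃ : Ds * (sIn - ss) = g₁ ss * x₁s + g₂ ss * x₂s)
    (G₁ G₂ G₃ : ℝ → ℝ → ℝ → ℝ → ℝ → ℝ → ℝ)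
    (hG₁C : Continuous fun v : ℝ × ℝ × ℝ × ℝ × ℝ × ℝ =>
      G₁ v.1 v.2.1 v.2.2.1 v.2.2.2.1 v.2.2.2.2.1 v.2.2.2.2.2)
    (hG₂C : Continuous fun v : ℝ × ℝ × ℝ × ℝ × ℝ × ℝ =>
      G₂ v.1 v.2.1 v.2.2.1 v.2.2.2.1 v.2.2.2.2.1 v.2.2.2.2.2)
    (hG₃C : Continuous fun v : ℝ × ℝ × ℝ × ℝ × ℝ × ℝ =>
      G₃ v.1 v.2.1 v.2.2.1 v.2.2.2.1 v.2.2.2.2.1 v.2.2.2.2.2) :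
    ∀ z₀₁ > (0:ℝ), ∀ z₀₂ > (0:ℝ),
      Ds * (sIn - ss) = g₁ ss * z₀₁ + g₂ ss * z₀₂ →
      -- the constant functions `z₁ ≡ z₀₁`, `z₂ ≡ z₀₂`, `ξ ≡ s*` solve the observer (3.20)
      -- along the plant trajectory `s ≡ s*`, `D ≡ D*`, `s_in ≡ s_in`:
      ((∀ t : ℝ, HasDerivAt (fun _ : ℝ => z₀₁)
          ((μ₁ ss - Ds - b₁) * z₀₁ + (ss - ss) * G₁ ss ss z₀₁ z₀₂ Ds sIn) t) ∧
       (∀ t : ℝ, HasDerivAt (fun _ : ℝ => z₀₂)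
          ((μ₂ ss - Ds - b₂) * z₀₂ + (ss - ss) * G₂ ss ss z₀₁ z₀₂ Ds sIn) t) ∧
       (∀ t : ℝ, HasDerivAt (fun _ : ℝ => ss)
          (Ds * (sIn - ss) - g₁ ss * z₀₁ - g₂ ss * z₀₂ +
            (ss - ss) * G₃ ss ss z₀₁ z₀₂ Ds sIn) t)) ∧
      -- consequently, for every admissible plant initial state `x₀ ≠ z₀`, the plant solution
      -- is constant and the estimation error stays equal to its (nonzero) initial value:
      (∀ x₀₁ > (0:ℝ), ∀ x₀₂ > (0:ℝ),
        Ds * (sIn - ss) = g₁ ss * x₀₁ + g₂ ss * x₀₂ → (x₀₁, x₀₂) ≠ (z₀₁, z₀₂) →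
        ((∀ t : ℝ, HasDerivAt (fun _ : ℝ => x₀₁) ((μ₁ ss - Ds - b₁) * x₀₁) t) ∧
         (∀ t : ℝ, HasDerivAt (fun _ : ℝ => x₀₂) ((μ₂ ss - Ds - b₂) * x₀₂) t) ∧
         (∀ t : ℝ, HasDerivAt (fun _ : ℝ => ss)
            (Ds * (sIn - ss) - g₁ ss * x₀₁ - g₂ ss * x₀₂) t)) ∧
        (∀ t : ℝ, t ≥ 0 →
          ‖((z₀₁, z₀₂) : ℝ × ℝ) - (x₀₁, x₀₂)‖ = ‖((z₀₁, z₀₂) : ℝ × ℝ) - (x₀₁, x₀₂)‖ ∧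
          0 < ‖((z₀₁, z₀₂) : ℝ × ℝ) - (x₀₁, x₀₂)‖)) :=
  no_smooth_observer_under_coexistence_general μ₁ μ₂ g₁ g₂ b₁ b₂ Ds sIn ss heq₁ heq₂ G₁ G₂ G₃
end

section
/- Let a₁, a₂, k₁, k₂ > 0 and b₁, b₂ ≥ 0, and suppose that NOT (a₁ = a₂ and b₁ = b₂ and k₁ = k₂). Consider the batch culture system ẋ₁ = (a₁s/(k₁+s) − b₁)x₁, ẋ₂ = (a₂s/(k₂+s) − b₂)x₂, ṡ = −(a₁s/(k₁+s))x₁ − (a₂s/(k₂+s))x₂. Then for every r > 0 the system is strongly observable in time r: if (x₁, x₂, s) and (χ₁, χ₂, σ) are two continuously differentiable solutions on [0,r] with all components positive and with s(t) = σ(t) for all t ∈ [0,r], then (x₁(0), x₂(0)) = (χ₁(0), χ₂(0)). -/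
open Set

/-!
Since `s = σ`, each `χᵢ` solves the same scalar linear equation as `xᵢ`, so `xᵢ = cᵢ χᵢ`, and
equating `ṡ` with `σ̇` gives `(c₁ - 1) u₁ + (c₂ - 1) u₂ = 0` for the positive uptakes
`uᵢ = μᵢ(s) χᵢ`. Unless `c₁ = c₂ = 1`, the two uptakes are proportional and hence have the same
logarithmic derivative `L`. This makes `(k₁ - k₂) ṡ = Q(s)` for an explicit quadratic `Q`, and
`ṡ = -(μ₁(s) x₁ + μ₂(s) x₂)` satisfies `s̈ = L ṡ`; differentiating `(k₁ - k₂) ṡ = Q(s)` then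
gives a cubic that vanishes on the range of the strictly decreasing `s`. Its leading and constant
coefficients force `a₁ = a₂` and `b₁ = b₂`, after which `(k₁ - k₂) ṡ = (k₁ - k₂) a₁ s` with
`ṡ < 0` forces `k₁ = k₂`.
-/

open Polynomial in
theorem cubic_coeffs_eq_zero_of_infinite {S : Set ℝ} (hS : S.Infinite) {c₀ c₁ c₂ c₃ : ℝ}
    (h : ∀ y ∈ S, c₃ * y ^ 3 + c₂ * y ^ 2 + c₁ * y + c₀ = 0) :
    c₃ = 0 ∧ c₂ = 0 ∧ c₁ = 0 ∧ c₀ = 0 := by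
  have hp : C c₃ * X ^ 3 + C c₂ * X ^ 2 + C c₁ * X + C c₀ = 0 :=
    eq_zero_of_infinite_isRoot _ <| hS.mono fun y hy => by simpa using h y hy
  refine ⟨?_, ?_, ?_, ?_⟩
  · simpa using congrArg (coeff · 3) hp
  · simpa using congrArg (coeff · 2) hp
  · simpa using congrArg (coeff · 1) hp
  · simpa using congrArg (coeff · 0) hp

theorem HasDerivAt.unique_of_eqOn {𝕜 F : Type*} [NontriviallyNormedField 𝕜]
    [NormedAddCommGroup F] [NormedSpace 𝕜 F] {f g : 𝕜 → F} {f' g' : F} {t : 𝕜} {U : Set 𝕜}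
    (hU : IsOpen U) (hfg : EqOn f g U) (ht : t ∈ U) (hf : HasDerivAt f f' t)
    (hg : HasDerivAt g g' t) : f' = g' :=
  hf.unique <| hg.congr_of_eventuallyEq <| Filter.eventuallyEq_of_mem (hU.mem_nhds ht) hfg

theorem eq_div_mul_of_hasDerivAt_mul_self {p x y : ℝ → ℝ} {a b : ℝ}
    (hy : ∀ t ∈ Icc a b, y t ≠ 0)
    (hx : ∀ t ∈ Icc a b, HasDerivAt x (p t * x t) t)
    (hy' : ∀ t ∈ Icc a b, HasDerivAt y (p t * y t) t) :
    ∀ t ∈ Icc a b, x t = x a / y a * y t := by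
  have hratio : ∀ t ∈ Icc a b, HasDerivAt (fun t => x t / y t) 0 t := fun t ht => by
    have h := (hx t ht).div (hy' t ht) (hy t ht)
    rwa [show p t * x t * y t - x t * (p t * y t) = 0 by ring, zero_div] at h
  have hconst := constant_of_has_deriv_right_zero (f := fun t => x t / y t)
    (fun t ht => (hratio t ht).continuousAt.continuousWithinAt)
    fun t ht => (hratio t (Ico_subset_Icc_self ht)).hasDerivWithinAt
  intro t ht
  rw [← hconst t ht, div_mul_cancel₀ _ (hy t ht)]

theorem eq_of_linear_dependence {f g F G : ℝ → ℝ} {U : Set ℝ} (hU : IsOpen U) {α β : ℝ}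
    (hαβ : α ≠ 0 ∨ β ≠ 0) (hf : ∀ t ∈ U, f t ≠ 0) (hg : ∀ t ∈ U, g t ≠ 0)
    (hf' : ∀ t ∈ U, HasDerivAt f (F t * f t) t) (hg' : ∀ t ∈ U, HasDerivAt g (G t * g t) t)
    (hdep : ∀ t ∈ U, α * f t + β * g t = 0) :
    ∀ t ∈ U, F t = G t := by
  intro t ht
  have hderiv : α * (F t * f t) + β * (G t * g t) = 0 :=
    HasDerivAt.unique_of_eqOn hU hdep ht (((hf' t ht).const_mul α).add ((hg' t ht).const_mul β))
      (hasDerivAt_const t 0)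
  have hβ : β ≠ 0 := by
    rintro rfl
    simp only [zero_mul, add_zero, ne_eq, not_true_eq_false, or_false] at hdep hαβ
    exact hαβ ((mul_eq_zero.1 (hdep t ht)).resolve_right (hf t ht))
  have : β * g t * (G t - F t) = 0 := by linear_combination hderiv - F t * hdep t ht
  exact (sub_eq_zero.1 ((mul_eq_zero.1 this).resolve_left (mul_ne_zero hβ (hg t ht)))).symm

noncomputable def michaelisMenten (a k y : ℝ) : ℝ := a * y / (k + y)

theorem michaelisMenten_pos {a k y : ℝ} (ha : 0 < a) (hk : 0 ≤ k) (hy : 0 < y) :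
    0 < michaelisMenten a k y := by
  unfold michaelisMenten
  positivity

/-- The logarithmic derivative of the uptake `michaelisMenten a k (s t) * x t` of a species with
mortality `b`, at a time where `s = y` and `ṡ = y'`. -/
noncomputable def uptakeGrowthRate (a k b y y' : ℝ) : ℝ :=
  k * y' / (y * (k + y)) + michaelisMenten a k y - b

theorem hasDerivAt_michaelisMenten_mul {a k b t s' : ℝ} {s x : ℝ → ℝ} (hk : 0 ≤ k)
    (hst : 0 < s t) (hs : HasDerivAt s s' t)
    (hx : HasDerivAt x ((michaelisMenten a k (s t) - b) * x t) t) :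
    HasDerivAt (fun t => michaelisMenten a k (s t) * x t)
      (uptakeGrowthRate a k b (s t) s' * (michaelisMenten a k (s t) * x t)) t := by
  have hkst : k + s t ≠ 0 := by positivity
  refine (((hs.const_mul a).div (hs.const_add k) hkst).mul hx).congr_deriv ?_
  simp only [uptakeGrowthRate, michaelisMenten, Pi.div_apply]
  field_simp
  ring

theorem params_eq_of_uptakeGrowthRate_eq {a₁ a₂ k₁ k₂ b₁ b₂ p q : ℝ} {s v : ℝ → ℝ}
    (hpq : p < q) (hk₁ : 0 < k₁) (hk₂ : 0 < k₂) (ha₂ : 0 ≤ a₂)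
    (hspos : ∀ t ∈ Ioo p q, 0 < s t) (hvneg : ∀ t ∈ Ioo p q, v t < 0)
    (hs : ∀ t ∈ Ioo p q, HasDerivAt s (v t) t)
    (hv : ∀ t ∈ Ioo p q, HasDerivAt v (uptakeGrowthRate a₂ k₂ b₂ (s t) (v t) * v t) t)
    (hrate : ∀ t ∈ Ioo p q,
      uptakeGrowthRate a₁ k₁ b₁ (s t) (v t) = uptakeGrowthRate a₂ k₂ b₂ (s t) (v t)) :
    a₁ = a₂ ∧ b₁ = b₂ ∧ k₁ = k₂ := by
  set α := a₂ - a₁ + b₁ - b₂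
  set β := a₂ * k₁ - a₁ * k₂ + (b₁ - b₂) * (k₁ + k₂)
  set γ := (b₁ - b₂) * (k₁ * k₂)
  have hQ : ∀ t ∈ Ioo p q, (k₁ - k₂) * v t = α * s t ^ 2 + β * s t + γ := by
    intro t ht
    have h := hrate t ht
    have := hspos t ht
    simp only [uptakeGrowthRate, michaelisMenten] at h
    field_simp at h
    apply mul_left_cancel₀ this.ne'
    linear_combination h
  have hQ' : ∀ t ∈ Ioo p q,
      (k₁ - k₂) * (uptakeGrowthRate a₂ k₂ b₂ (s t) (v t) * v t) = (2 * α * s t + β) * v t := by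
    intro t ht
    refine HasDerivAt.unique_of_eqOn isOpen_Ioo hQ ht ((hv t ht).const_mul _) ?_
    refine ((((hs t ht).pow 2).const_mul α).add ((hs t ht).const_mul β)).add_const γ
      |>.congr_deriv ?_
    push_cast
    ring
  have hcubic : ∀ y ∈ s '' Ioo p q, (2 * α) * y ^ 3 + (α * k₂ + β - (k₁ - k₂) * (a₂ - b₂)) * y ^ 2
      + ((k₁ - k₂) * b₂ * k₂) * y + -(k₂ * γ) = 0 := by
    rintro _ ⟨t, ht, rfl⟩
    have h := hQ' t ht
    rw [← mul_assoc] at h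
    replace h := mul_right_cancel₀ (hvneg t ht).ne h
    have := hspos t ht
    simp only [uptakeGrowthRate, michaelisMenten] at h
    field_simp at h
    linear_combination k₂ * hQ t ht - h
  have hinj : InjOn s (Ioo p q) := by
    refine (strictAntiOn_of_hasDerivWithinAt_neg (f' := v) (convex_Ioo p q)
      (fun t ht => (hs t ht).continuousAt.continuousWithinAt) ?_ ?_).injOn <;> rw [interior_Ioo]
    exacts [fun t ht => (hs t ht).hasDerivWithinAt, hvneg]
  obtain ⟨hα, -, -, hγ⟩ := cubic_coeffs_eq_zero_of_infinite ((Ioo_infinite hpq).image hinj) hcubic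
  have hb : b₁ = b₂ := by
    have : (b₁ - b₂) * (k₂ * (k₁ * k₂)) = 0 := by linear_combination -hγ
    simpa [sub_eq_zero, hk₁.ne', hk₂.ne'] using this
  have ha : a₁ = a₂ := by linarith
  refine ⟨ha, hb, ?_⟩
  by_contra hk
  obtain ⟨t, ht⟩ := nonempty_Ioo.2 hpq
  have : v t = a₂ * s t := by
    apply mul_left_cancel₀ (sub_ne_zero.2 hk)
    linear_combination
      hQ t ht + (k₁ * k₂ + (k₁ + k₂) * s t + s t ^ 2) * hb - (k₂ * s t + s t ^ 2) * ha
  nlinarith [hvneg t ht, hspos t ht]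

theorem batch_params_eq_of_uptakeGrowthRate_eq {a₁ a₂ k₁ k₂ b₁ b₂ p q : ℝ} {x₁ x₂ s : ℝ → ℝ}
    (hpq : p < q) (ha₁ : 0 < a₁) (ha₂ : 0 < a₂) (hk₁ : 0 < k₁) (hk₂ : 0 < k₂)
    (hx₁pos : ∀ t ∈ Ioo p q, 0 < x₁ t) (hx₂pos : ∀ t ∈ Ioo p q, 0 < x₂ t)
    (hspos : ∀ t ∈ Ioo p q, 0 < s t)
    (hx₁ : ∀ t ∈ Ioo p q, HasDerivAt x₁ ((michaelisMenten a₁ k₁ (s t) - b₁) * x₁ t) t)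
    (hx₂ : ∀ t ∈ Ioo p q, HasDerivAt x₂ ((michaelisMenten a₂ k₂ (s t) - b₂) * x₂ t) t)
    (hs : ∀ t ∈ Ioo p q, HasDerivAt s
      (-michaelisMenten a₁ k₁ (s t) * x₁ t - michaelisMenten a₂ k₂ (s t) * x₂ t) t)
    (hrate : ∀ t ∈ Ioo p q,
      uptakeGrowthRate a₁ k₁ b₁ (s t)
          (-michaelisMenten a₁ k₁ (s t) * x₁ t - michaelisMenten a₂ k₂ (s t) * x₂ t) =
        uptakeGrowthRate a₂ k₂ b₂ (s t)
          (-michaelisMenten a₁ k₁ (s t) * x₁ t - michaelisMenten a₂ k₂ (s t) * x₂ t)) :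
    a₁ = a₂ ∧ b₁ = b₂ ∧ k₁ = k₂ := by
  set v : ℝ → ℝ := fun t =>
    -michaelisMenten a₁ k₁ (s t) * x₁ t - michaelisMenten a₂ k₂ (s t) * x₂ t
  have hvneg : ∀ t ∈ Ioo p q, v t < 0 := fun t ht => by
    have := mul_pos (michaelisMenten_pos ha₁ hk₁.le (hspos t ht)) (hx₁pos t ht)
    have := mul_pos (michaelisMenten_pos ha₂ hk₂.le (hspos t ht)) (hx₂pos t ht)
    simp only [v, neg_mul]
    linarith
  have hv : ∀ t ∈ Ioo p q, HasDerivAt v (uptakeGrowthRate a₂ k₂ b₂ (s t) (v t) * v t) t := by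
    intro t ht
    have h₁ := hasDerivAt_michaelisMenten_mul hk₁.le (hspos t ht) (hs t ht) (hx₁ t ht)
    have h₂ := hasDerivAt_michaelisMenten_mul hk₂.le (hspos t ht) (hs t ht) (hx₂ t ht)
    refine ((h₁.neg.sub h₂).congr_of_eventuallyEq
      (Filter.Eventually.of_forall fun u => ?_)).congr_deriv ?_
    · simp only [v, Pi.sub_apply, Pi.neg_apply]
      ring
    · rw [hrate t ht]
      ring
  exact params_eq_of_uptakeGrowthRate_eq hpq hk₁ hk₂ ha₂.le hspos hvneg hs hv hrate

theorem batch_culture_strongly_observable_general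
    (a₁ a₂ k₁ k₂ : ℝ) (ha₁ : 0 < a₁) (ha₂ : 0 < a₂) (hk₁ : 0 < k₁) (hk₂ : 0 < k₂)
    (b₁ b₂ : ℝ)
    (hne : ¬ (a₁ = a₂ ∧ b₁ = b₂ ∧ k₁ = k₂))
    (r : ℝ) (hr : 0 < r)
    (x₁ x₂ s χ₁ χ₂ σ : ℝ → ℝ)
    (hx₁pos : ∀ t ∈ Icc 0 r, 0 < x₁ t) (hx₂pos : ∀ t ∈ Icc 0 r, 0 < x₂ t)
    (hspos : ∀ t ∈ Icc 0 r, 0 < s t)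
    (hχ₁pos : ∀ t ∈ Icc 0 r, 0 < χ₁ t) (hχ₂pos : ∀ t ∈ Icc 0 r, 0 < χ₂ t)
    (hx₁ : ∀ t ∈ Icc 0 r,
      HasDerivAt x₁ ((a₁ * s t / (k₁ + s t) - b₁) * x₁ t) t)
    (hx₂ : ∀ t ∈ Icc 0 r,
      HasDerivAt x₂ ((a₂ * s t / (k₂ + s t) - b₂) * x₂ t) t)
    (hs : ∀ t ∈ Icc 0 r,
      HasDerivAt s (-(a₁ * s t / (k₁ + s t)) * x₁ t - (a₂ * s t / (k₂ + s t)) * x₂ t) t)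
    (hχ₁ : ∀ t ∈ Icc 0 r,
      HasDerivAt χ₁ ((a₁ * σ t / (k₁ + σ t) - b₁) * χ₁ t) t)
    (hχ₂ : ∀ t ∈ Icc 0 r,
      HasDerivAt χ₂ ((a₂ * σ t / (k₂ + σ t) - b₂) * χ₂ t) t)
    (hσ : ∀ t ∈ Icc 0 r,
      HasDerivAt σ (-(a₁ * σ t / (k₁ + σ t)) * χ₁ t - (a₂ * σ t / (k₂ + σ t)) * χ₂ t) t)
    (hout : ∀ t ∈ Icc 0 r, s t = σ t) :
    (x₁ 0, x₂ 0) = (χ₁ 0, χ₂ 0) := by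
  have restrict : ∀ {P : ℝ → Prop}, (∀ t ∈ Icc 0 r, P t) → ∀ t ∈ Ioo 0 r, P t :=
    fun h t ht => h t (Ioo_subset_Icc_self ht)
  have hχ₁s : ∀ t ∈ Icc 0 r, HasDerivAt χ₁ ((michaelisMenten a₁ k₁ (s t) - b₁) * χ₁ t) t :=
    fun t ht => hout t ht ▸ hχ₁ t ht
  have hχ₂s : ∀ t ∈ Icc 0 r, HasDerivAt χ₂ ((michaelisMenten a₂ k₂ (s t) - b₂) * χ₂ t) t :=
    fun t ht => hout t ht ▸ hχ₂ t ht
  have hc₁ := eq_div_mul_of_hasDerivAt_mul_self (fun t ht => (hχ₁pos t ht).ne') hx₁ hχ₁s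
  have hc₂ := eq_div_mul_of_hasDerivAt_mul_self (fun t ht => (hχ₂pos t ht).ne') hx₂ hχ₂s
  set c₁ := x₁ 0 / χ₁ 0
  set c₂ := x₂ 0 / χ₂ 0
  have hdep : ∀ t ∈ Ioo 0 r, (c₁ - 1) * (michaelisMenten a₁ k₁ (s t) * χ₁ t)
      + (c₂ - 1) * (michaelisMenten a₂ k₂ (s t) * χ₂ t) = 0 := by
    intro t ht
    have h := HasDerivAt.unique_of_eqOn isOpen_Ioo (restrict hout) ht (restrict hs t ht)
      (restrict hσ t ht)
    rw [restrict hc₁ t ht, restrict hc₂ t ht, ← restrict hout t ht] at h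
    simp only [michaelisMenten]
    linear_combination -h
  by_cases hc : c₁ - 1 = 0 ∧ c₂ - 1 = 0
  · have h0 : (0 : ℝ) ∈ Icc 0 r := left_mem_Icc.2 hr.le
    rw [hc₁ 0 h0, hc₂ 0 h0, sub_eq_zero.1 hc.1, sub_eq_zero.1 hc.2, one_mul, one_mul]
  have hrate := eq_of_linear_dependence isOpen_Ioo (not_and_or.1 hc)
    (fun t ht => (mul_pos (michaelisMenten_pos ha₁ hk₁.le (restrict hspos t ht))
      (restrict hχ₁pos t ht)).ne')
    (fun t ht => (mul_pos (michaelisMenten_pos ha₂ hk₂.le (restrict hspos t ht))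
      (restrict hχ₂pos t ht)).ne')
    (fun t ht => hasDerivAt_michaelisMenten_mul hk₁.le (restrict hspos t ht) (restrict hs t ht)
      (restrict hχ₁s t ht))
    (fun t ht => hasDerivAt_michaelisMenten_mul hk₂.le (restrict hspos t ht) (restrict hs t ht)
      (restrict hχ₂s t ht))
    hdep
  exact absurd (batch_params_eq_of_uptakeGrowthRate_eq hr ha₁ ha₂ hk₁ hk₂ (restrict hx₁pos)
    (restrict hx₂pos) (restrict hspos) (restrict hx₁) (restrict hx₂) (restrict hs) hrate) hne

/-- Theorem 3.5 (contrapositive form): if the Michaelis–Menten kinetics and mortality rates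
of the two species are not identical, the batch culture (3.23) is strongly observable in
time `r` for every `r > 0`. -/
theorem batch_culture_strongly_observable
    (a₁ a₂ k₁ k₂ : ℝ) (ha₁ : 0 < a₁) (ha₂ : 0 < a₂) (hk₁ : 0 < k₁) (hk₂ : 0 < k₂)
    (b₁ b₂ : ℝ) (hb₁ : 0 ≤ b₁) (hb₂ : 0 ≤ b₂)
    (hne : ¬ (a₁ = a₂ ∧ b₁ = b₂ ∧ k₁ = k₂))
    (r : ℝ) (hr : 0 < r)
    (x₁ x₂ s χ₁ χ₂ σ : ℝ → ℝ)
    (hx₁pos : ∀ t ∈ Icc 0 r, 0 < x₁ t) (hx₂pos : ∀ t ∈ Icc 0 r, 0 < x₂ t)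
    (hspos : ∀ t ∈ Icc 0 r, 0 < s t)
    (hχ₁pos : ∀ t ∈ Icc 0 r, 0 < χ₁ t) (hχ₂pos : ∀ t ∈ Icc 0 r, 0 < χ₂ t)
    (hσpos : ∀ t ∈ Icc 0 r, 0 < σ t)
    (hx₁ : ∀ t ∈ Icc 0 r,
      HasDerivAt x₁ ((a₁ * s t / (k₁ + s t) - b₁) * x₁ t) t)
    (hx₂ : ∀ t ∈ Icc 0 r,
      HasDerivAt x₂ ((a₂ * s t / (k₂ + s t) - b₂) * x₂ t) t)
    (hs : ∀ t ∈ Icc 0 r,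
      HasDerivAt s (-(a₁ * s t / (k₁ + s t)) * x₁ t - (a₂ * s t / (k₂ + s t)) * x₂ t) t)
    (hχ₁ : ∀ t ∈ Icc 0 r,
      HasDerivAt χ₁ ((a₁ * σ t / (k₁ + σ t) - b₁) * χ₁ t) t)
    (hχ₂ : ∀ t ∈ Icc 0 r,
      HasDerivAt χ₂ ((a₂ * σ t / (k₂ + σ t) - b₂) * χ₂ t) t)
    (hσ : ∀ t ∈ Icc 0 r,
      HasDerivAt σ (-(a₁ * σ t / (k₁ + σ t)) * χ₁ t - (a₂ * σ t / (k₂ + σ t)) * χ₂ t) t)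
    (hout : ∀ t ∈ Icc 0 r, s t = σ t) :
    (x₁ 0, x₂ 0) = (χ₁ 0, χ₂ 0) :=
  batch_culture_strongly_observable_general a₁ a₂ k₁ k₂ ha₁ ha₂ hk₁ hk₂ b₁ b₂ hne r hr x₁ x₂ s χ₁ χ₂
    σ hx₁pos hx₂pos hspos hχ₁pos hχ₂pos hx₁ hx₂ hs hχ₁ hχ₂ hσ hout
end

section
/- Let μ₁, μ₂, g₁, g₂ : [0,∞) → [0,∞) be continuously differentiable bounded functions vanishing at 0 and positive on (0,∞), b₁, b₂ ≥ 0, let s_in > 0 be a constant and define κ(σ) := (d/dσ) ln(g₁(σ)/g₂(σ)). Assume there is c > 0 such that either (A1) κ(σ) ≠ 0 and (μ₂(σ) − μ₁(σ) + b₁ − b₂)/κ(σ) ≤ −c for all σ ∈ (0, s_in), or (A2) κ(σ) ≠ 0 and (μ₂(σ) − μ₁(σ) + b₁ − b₂)/κ(σ) ≥ c for all σ ∈ (0, s_in). Then for every r ≥ c⁻¹s_in the two-species chemostat with constant inlet concentration s_in is strongly observable in time r: for any measurable bounded D : [0,r] → [0,∞), if (x₁, x₂, s) and (χ₁, χ₂,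 σ) are two solutions (continuous functions satisfying the integral equations) with x-components positive and s-components taking values in (0, s_in), and s(t) = σ(t) for all t ∈ [0,r], then (x₁(0), x₂(0)) = (χ₁(0), χ₂(0)). -/
/-!
When the two solutions share the substrate `s`, each biomass solves the same linear equation
`ẋᵢ = (μᵢ(s) - D - bᵢ) xᵢ` for both, so by Grönwall `xᵢ = αᵢ χᵢ` with `αᵢ = xᵢ(0) / χᵢ(0)`.
Subtracting the two substrate equations gives `g₁(s) χ₁ (α₁ - 1) = g₂(s) χ₂ (1 - α₂)`, so unless
`α₁ = α₂ = 1` the ratio `g₁(s) χ₁ / (g₂(s) χ₂)` is constant. Differentiating its logarithm gives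
`κ(s) ṡ = μ₂(s) - μ₁(s) + b₁ - b₂` almost everywhere, so under (A1) or (A2) the substrate moves
monotonically at speed at least `c` and cannot stay in `(0, s_in)` up to time `r ≥ s_in / c`.
-/

open Real Set MeasureTheory Filter Topology

theorem MeasureTheory.IntegrableOn.intervalIntegrable_of_mem_Icc {f : ℝ → ℝ} {a b t : ℝ}
    (hf : IntegrableOn f (Icc a b)) (ht : t ∈ Icc a b) : IntervalIntegrable f volume a t :=
  (hf.mono_set (by rw [uIcc_of_le ht.1]; exact Icc_subset_Icc_right ht.2)).intervalIntegrable

theorem integrableOn_Icc_of_abs_le {f : ℝ → ℝ} {a b M : ℝ}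
    (hf : AEStronglyMeasurable f (volume.restrict (Icc a b))) (hM : ∀ t ∈ Icc a b, |f t| ≤ M) :
    IntegrableOn f (Icc a b) :=
  .of_bound measure_Icc_lt_top hf M ((ae_restrict_iff' measurableSet_Icc).2 (.of_forall hM))

theorem eqOn_zero_of_abs_le_mul_integral_abs {d : ℝ → ℝ} {a b K : ℝ}
    (hd : ContinuousOn d (Icc a b)) (h : ∀ t ∈ Icc a b, |d t| ≤ K * ∫ τ in a..t, |d τ|) :
    EqOn d 0 (Icc a b) := by
  have hint : IntegrableOn (fun τ => |d τ|) (Icc a b) := hd.abs.integrableOn_compact isCompact_Icc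
  have hu_nonneg : ∀ t ∈ Icc a b, 0 ≤ ∫ τ in a..t, |d τ| := fun t ht =>
    intervalIntegral.integral_nonneg ht.1 fun _ _ => abs_nonneg _
  have hu : ∀ t ∈ Icc a b, ∫ τ in a..t, |d τ| = 0 := by
    refine eq_zero_of_abs_deriv_le_mul_abs_self_of_eq_zero_right (f' := fun t => |d t|) (K := K)
      ?_ (fun t ht => ?_) (by simp) (fun t ht => ?_)
    · rcases le_or_gt a b with hab | hab
      · rw [← uIcc_of_le hab] at hint ⊢
        exact intervalIntegral.continuousOn_primitive_interval hint
      · simp [Icc_eq_empty_of_lt hab]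
    · have hmem : Icc a b ∈ 𝓝[>] t := Icc_mem_nhdsGT_of_mem ht
      exact intervalIntegral.integral_hasDerivWithinAt_right
        (hint.intervalIntegrable_of_mem_Icc (Ico_subset_Icc_self ht))
        ((hd.abs.stronglyMeasurableAtFilter_nhdsWithin measurableSet_Icc t).filter_mono
          (nhdsWithin_le_of_mem hmem))
        ((hd.abs t (Ico_subset_Icc_self ht)).mono_of_mem_nhdsWithin hmem)
    · rw [norm_abs_eq_norm (d t), Real.norm_eq_abs, Real.norm_eq_abs,
        abs_of_nonneg (hu_nonneg t (Ico_subset_Icc_self ht))]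
      exact h t (Ico_subset_Icc_self ht)
  intro t ht
  simpa [hu t ht] using h t ht

theorem eqOn_const_mul_of_eq_integral_mul {k X Y : ℝ → ℝ} {a b K γ : ℝ}
    (hk : AEStronglyMeasurable k (volume.restrict (Icc a b)))
    (hkK : ∀ t ∈ Icc a b, |k t| ≤ K)
    (hX : ContinuousOn X (Icc a b)) (hY : ContinuousOn Y (Icc a b)) (hXY : X a = γ * Y a)
    (hXeq : ∀ t ∈ Icc a b, X t = X a + ∫ τ in a..t, k τ * X τ)
    (hYeq : ∀ t ∈ Icc a b, Y t = Y a + ∫ τ in a..t, k τ * Y τ) :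
    EqOn X (fun t => γ * Y t) (Icc a b) := by
  have hkint : IntegrableOn k (Icc a b) := integrableOn_Icc_of_abs_le hk hkK
  have hd : ContinuousOn (fun t => X t - γ * Y t) (Icc a b) := hX.sub (continuousOn_const.mul hY)
  have hdeq : ∀ t ∈ Icc a b, X t - γ * Y t = ∫ τ in a..t, k τ * (X τ - γ * Y τ) := by
    intro t ht
    have hkX := (hkint.mul_continuousOn hX isCompact_Icc).intervalIntegrable_of_mem_Icc ht
    have hkY := (hkint.mul_continuousOn hY isCompact_Icc).intervalIntegrable_of_mem_Icc ht
    simp_rw [mul_sub, mul_left_comm (k _) γ]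
    rw [intervalIntegral.integral_sub hkX (hkY.const_mul γ), intervalIntegral.integral_const_mul,
      hXeq t ht, hYeq t ht, hXY]
    ring
  have hzero := eqOn_zero_of_abs_le_mul_integral_abs (K := K) hd fun t ht => calc
    |X t - γ * Y t| = |∫ τ in a..t, k τ * (X τ - γ * Y τ)| := by rw [← hdeq t ht]
    _ ≤ ∫ τ in a..t, |k τ * (X τ - γ * Y τ)| := intervalIntegral.abs_integral_le_integral_abs ht.1
    _ ≤ ∫ τ in a..t, K * |X τ - γ * Y τ| := by
      refine intervalIntegral.integral_mono_on ht.1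
        ((hkint.mul_continuousOn hd isCompact_Icc).intervalIntegrable_of_mem_Icc ht).abs
        (((hd.abs.integrableOn_compact isCompact_Icc).intervalIntegrable_of_mem_Icc ht).const_mul
          K)
        fun τ hτ => ?_
      rw [abs_mul]
      exact mul_le_mul_of_nonneg_right (hkK τ ⟨hτ.1, hτ.2.trans ht.2⟩) (abs_nonneg _)
    _ = K * ∫ τ in a..t, |X τ - γ * Y τ| := intervalIntegral.integral_const_mul _ _
  exact fun t ht => sub_eq_zero.1 (hzero ht)

theorem ae_hasDerivAt_of_eq_integral {F f : ℝ → ℝ} {a b : ℝ} (hf : IntegrableOn f (Icc a b))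
    (hF : ∀ t ∈ Icc a b, F t = F a + ∫ τ in a..t, f τ) :
    ∀ᵐ t, t ∈ Ioo a b → HasDerivAt F (f t) t := by
  rcases lt_or_ge a b with hab | hab
  · have hfi := hf.intervalIntegrable_of_mem_Icc (right_mem_Icc.2 hab.le)
    filter_upwards [hfi.ae_hasDerivAt_integral] with t hderiv ht
    have ht' : t ∈ uIcc a b := by rw [uIcc_of_le hab.le]; exact Ioo_subset_Icc_self ht
    refine ((hderiv ht' a left_mem_uIcc).const_add (F a)).congr_of_eventuallyEq ?_
    filter_upwards [Icc_mem_nhds ht.1 ht.2] with u hu using hF u hu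
  · exact .of_forall fun t ht => absurd (ht.1.trans ht.2) hab.not_gt

theorem eqOn_zero_of_integral_eq_zero {f : ℝ → ℝ} {a b : ℝ} (hf : ContinuousOn f (Icc a b))
    (h : ∀ t ∈ Icc a b, ∫ τ in a..t, f τ = 0) : EqOn f 0 (Ioo a b) := by
  intro t ht
  have hmem : Icc a b ∈ 𝓝 t := Icc_mem_nhds ht.1 ht.2
  have hderiv := intervalIntegral.integral_hasDerivAt_right
    ((hf.integrableOn_compact isCompact_Icc).intervalIntegrable_of_mem_Icc (Ioo_subset_Icc_self ht))
    ((hf.mono Ioo_subset_Icc_self).stronglyMeasurableAtFilter isOpen_Ioo t ht)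
    (hf.continuousAt hmem)
  exact hderiv.unique ((hasDerivAt_const t 0).congr_of_eventuallyEq
    (eventually_of_mem hmem fun u hu => h u hu))

theorem mul_sub_le_integral_of_ae_le {f : ℝ → ℝ} {a b c : ℝ} (hab : a ≤ b)
    (hf : IntervalIntegrable f volume a b) (h : ∀ᵐ t, t ∈ Ioo a b → c ≤ f t) :
    c * (b - a) ≤ ∫ t in a..b, f t := by
  have hle : (fun _ => c) ≤ᵐ[volume.restrict (Icc a b)] f := by
    rw [← Measure.restrict_congr_set Ioo_ae_eq_Icc]
    exact (ae_restrict_iff' measurableSet_Ioo).2 h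
  simpa [mul_comm] using
    intervalIntegral.integral_mono_ae_restrict hab intervalIntegrable_const hf hle

theorem mul_sub_le_abs_sub_of_eq_integral {F f : ℝ → ℝ} {a b c : ℝ} (hab : a ≤ b)
    (hf : IntervalIntegrable f volume a b) (hF : F b = F a + ∫ t in a..b, f t)
    (h : (∀ᵐ t, t ∈ Ioo a b → f t ≤ -c) ∨ ∀ᵐ t, t ∈ Ioo a b → c ≤ f t) :
    c * (b - a) ≤ |F b - F a| := by
  rcases h with h | h
  · have := mul_sub_le_integral_of_ae_le hab hf.neg
      (h.mono fun t ht hmem => le_neg_of_le_neg (ht hmem))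
    simp only [Pi.neg_apply, intervalIntegral.integral_neg] at this
    linarith [neg_abs_le (F b - F a)]
  · linarith [mul_sub_le_integral_of_ae_le hab hf h, le_abs_self (F b - F a)]

theorem exists_div_eq_of_mul_sub_one_eq {p q : ℝ → ℝ} {U : Set ℝ} {α β : ℝ} (hU : U.Nonempty)
    (hq : ∀ t ∈ U, q t ≠ 0) (hαβ : α ≠ 1 ∨ β ≠ 1)
    (h : ∀ t ∈ U, p t * (α - 1) = q t * (1 - β)) :
    ∃ K, ∀ t ∈ U, p t / q t = K := by
  obtain ⟨t₀, ht₀⟩ := hU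
  have hα : α - 1 ≠ 0 := by
    refine sub_ne_zero.2 fun hα => ?_
    have := h t₀ ht₀
    rw [hα, sub_self, mul_zero, eq_comm, mul_eq_zero] at this
    exact hαβ.elim (· hα) fun hβ => this.elim (hq t₀ ht₀) fun h => hβ (sub_eq_zero.1 h).symm
  exact ⟨(1 - β) / (α - 1), fun t ht => by
    rw [div_eq_div_iff (hq t ht) hα, h t ht, mul_comm]⟩

theorem ae_mul_eq_sub_of_div_eq_const {g₁ g₂ κ s s' y₁ y₂ k₁ k₂ : ℝ → ℝ} {U : Set ℝ} {K : ℝ}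
    (hU : IsOpen U) (hκ : ∀ t ∈ U, HasDerivAt (fun v => log (g₁ v / g₂ v)) (κ (s t)) (s t))
    (hs : ∀ᵐ t, t ∈ U → HasDerivAt s (s' t) t)
    (hy₁ : ∀ᵐ t, t ∈ U → HasDerivAt y₁ (k₁ t * y₁ t) t)
    (hy₂ : ∀ᵐ t, t ∈ U → HasDerivAt y₂ (k₂ t * y₂ t) t)
    (hg₁ : ∀ t ∈ U, 0 < g₁ (s t)) (hg₂ : ∀ t ∈ U, 0 < g₂ (s t))
    (hy₁pos : ∀ t ∈ U, 0 < y₁ t) (hy₂pos : ∀ t ∈ U, 0 < y₂ t)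
    (hK : ∀ t ∈ U, g₁ (s t) * y₁ t / (g₂ (s t) * y₂ t) = K) :
    ∀ᵐ t, t ∈ U → κ (s t) * s' t = k₂ t - k₁ t := by
  filter_upwards [hs, hy₁, hy₂] with t hst hy₁t hy₂t ht
  have hlog : ∀ u ∈ U, log (g₁ (s u) / g₂ (s u)) + log (y₁ u) - log (y₂ u) = log K := by
    intro u hu
    have h₁ := hg₁ u hu; have h₂ := hg₂ u hu; have h₃ := hy₁pos u hu; have h₄ := hy₂pos u hu
    rw [← hK u hu, log_div (mul_pos h₁ h₃).ne' (mul_pos h₂ h₄).ne', log_mul h₁.ne' h₃.ne',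
      log_mul h₂.ne' h₄.ne', log_div h₁.ne' h₂.ne']
    ring
  have hconst : HasDerivAt (fun u => log (g₁ (s u) / g₂ (s u)) + log (y₁ u) - log (y₂ u)) 0 t :=
    (hasDerivAt_const t (log K)).congr_of_eventuallyEq
      (eventually_of_mem (hU.mem_nhds ht) hlog)
  have hlog₁ := (hy₁t ht).log (hy₁pos t ht).ne'
  have hlog₂ := (hy₂t ht).log (hy₂pos t ht).ne'
  rw [mul_div_cancel_right₀ _ (hy₁pos t ht).ne'] at hlog₁
  rw [mul_div_cancel_right₀ _ (hy₂pos t ht).ne'] at hlog₂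
  have := ((((hκ t ht).comp t (hst ht)).add hlog₁).sub hlog₂).unique hconst
  linarith

theorem integrableOn_growth_rate_mul {φ D X : ℝ → ℝ} {r b : ℝ} (hφ : ContinuousOn φ (Icc 0 r))
    (hD : IntegrableOn D (Icc 0 r)) (hX : ContinuousOn X (Icc 0 r)) :
    IntegrableOn (fun τ => (φ τ - D τ - b) * X τ) (Icc 0 r) :=
  (((hφ.integrableOn_compact isCompact_Icc).sub hD).sub
    (continuousOn_const.integrableOn_compact isCompact_Icc)).mul_continuousOn hX isCompact_Icc

theorem eqOn_const_mul_of_eq_integral_growth {φ D X Y : ℝ → ℝ} {r b M γ : ℝ}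
    (hφ : ContinuousOn φ (Icc 0 r)) (hD : Measurable D) (hDM : ∀ t ∈ Icc 0 r, |D t| ≤ M)
    (hX : ContinuousOn X (Icc 0 r)) (hY : ContinuousOn Y (Icc 0 r)) (hXY : X 0 = γ * Y 0)
    (hXeq : ∀ t ∈ Icc 0 r, X t = X 0 + ∫ τ in (0:ℝ)..t, (φ τ - D τ - b) * X τ)
    (hYeq : ∀ t ∈ Icc 0 r, Y t = Y 0 + ∫ τ in (0:ℝ)..t, (φ τ - D τ - b) * Y τ) :
    EqOn X (fun t => γ * Y t) (Icc 0 r) := by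
  obtain ⟨C, hC⟩ := isCompact_Icc.exists_bound_of_continuousOn hφ
  refine eqOn_const_mul_of_eq_integral_mul (K := C + M + |b|)
    (((hφ.aestronglyMeasurable measurableSet_Icc).sub hD.aestronglyMeasurable).sub
      aestronglyMeasurable_const) (fun t ht => ?_) hX hY hXY hXeq hYeq
  show |φ t - D t - b| ≤ _
  linarith [abs_sub (φ t - D t) b, abs_sub (φ t) (D t), hC t ht, hDM t ht, Real.norm_eq_abs (φ t)]

/-- Solutions of the chemostat model (1.1) on `[0, r]`, in integral form. -/
structure IsChemostatSolution (μ₁ μ₂ g₁ g₂ : ℝ → ℝ) (b₁ b₂ sIn : ℝ) (D : ℝ → ℝ) (r : ℝ)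
    (x₁ x₂ s : ℝ → ℝ) : Prop where
  continuousOn_x₁ : ContinuousOn x₁ (Icc 0 r)
  continuousOn_x₂ : ContinuousOn x₂ (Icc 0 r)
  continuousOn_s : ContinuousOn s (Icc 0 r)
  x₁_eq : ∀ t ∈ Icc 0 r, x₁ t = x₁ 0 + ∫ τ in (0:ℝ)..t, (μ₁ (s τ) - D τ - b₁) * x₁ τ
  x₂_eq : ∀ t ∈ Icc 0 r, x₂ t = x₂ 0 + ∫ τ in (0:ℝ)..t, (μ₂ (s τ) - D τ - b₂) * x₂ τ
  s_eq : ∀ t ∈ Icc 0 r, s t = s 0 + ∫ τ in (0:ℝ)..t,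
    (D τ * (sIn - s τ) - g₁ (s τ) * x₁ τ - g₂ (s τ) * x₂ τ)

namespace IsChemostatSolution

variable {μ₁ μ₂ g₁ g₂ D x₁ x₂ s χ₁ χ₂ σ : ℝ → ℝ} {b₁ b₂ sIn r : ℝ}

theorem of_eqOn_substrate (hχ₁ : ContinuousOn χ₁ (Icc 0 r)) (hχ₂ : ContinuousOn χ₂ (Icc 0 r))
    (hs : ContinuousOn s (Icc 0 r))
    (hχ₁eq : ∀ t ∈ Icc 0 r, χ₁ t = χ₁ 0 + ∫ τ in (0:ℝ)..t, (μ₁ (σ τ) - D τ - b₁) * χ₁ τ)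
    (hχ₂eq : ∀ t ∈ Icc 0 r, χ₂ t = χ₂ 0 + ∫ τ in (0:ℝ)..t, (μ₂ (σ τ) - D τ - b₂) * χ₂ τ)
    (hσeq : ∀ t ∈ Icc 0 r, σ t = σ 0 + ∫ τ in (0:ℝ)..t,
      (D τ * (sIn - σ τ) - g₁ (σ τ) * χ₁ τ - g₂ (σ τ) * χ₂ τ))
    (hsσ : ∀ t ∈ Icc 0 r, s t = σ t) :
    IsChemostatSolution μ₁ μ₂ g₁ g₂ b₁ b₂ sIn D r χ₁ χ₂ s := by
  have hsub : ∀ t ∈ Icc 0 r, uIcc 0 t ⊆ Icc 0 r := fun t ht =>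
    uIcc_subset_Icc (left_mem_Icc.2 (ht.1.trans ht.2)) ht
  refine ⟨hχ₁, hχ₂, hs, fun t ht => ?_, fun t ht => ?_, fun t ht => ?_⟩
  · rw [hχ₁eq t ht]
    congr 1
    exact intervalIntegral.integral_congr fun τ hτ => by rw [hsσ τ (hsub t ht hτ)]
  · rw [hχ₂eq t ht]
    congr 1
    exact intervalIntegral.integral_congr fun τ hτ => by rw [hsσ τ (hsub t ht hτ)]
  · rw [hsσ t ht, hσeq t ht, hsσ 0 (left_mem_Icc.2 (ht.1.trans ht.2))]
    congr 1
    exact intervalIntegral.integral_congr fun τ hτ => by rw [hsσ τ (hsub t ht hτ)]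

theorem integrableOn_substrate_rate (hx : IsChemostatSolution μ₁ μ₂ g₁ g₂ b₁ b₂ sIn D r x₁ x₂ s)
    (hD : IntegrableOn D (Icc 0 r)) (hg₁ : ContinuousOn (fun τ => g₁ (s τ)) (Icc 0 r))
    (hg₂ : ContinuousOn (fun τ => g₂ (s τ)) (Icc 0 r)) :
    IntegrableOn (fun τ => D τ * (sIn - s τ) - g₁ (s τ) * x₁ τ - g₂ (s τ) * x₂ τ) (Icc 0 r) :=
  ((hD.mul_continuousOn (continuousOn_const.sub hx.continuousOn_s) isCompact_Icc).sub
    ((hg₁.mul hx.continuousOn_x₁).integrableOn_compact isCompact_Icc)).sub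
    ((hg₂.mul hx.continuousOn_x₂).integrableOn_compact isCompact_Icc)

theorem consumption_eqOn (hx : IsChemostatSolution μ₁ μ₂ g₁ g₂ b₁ b₂ sIn D r x₁ x₂ s)
    (hχ : IsChemostatSolution μ₁ μ₂ g₁ g₂ b₁ b₂ sIn D r χ₁ χ₂ s)
    (hD : IntegrableOn D (Icc 0 r)) (hg₁ : ContinuousOn (fun τ => g₁ (s τ)) (Icc 0 r))
    (hg₂ : ContinuousOn (fun τ => g₂ (s τ)) (Icc 0 r)) :
    EqOn (fun t => g₁ (s t) * x₁ t + g₂ (s t) * x₂ t)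
      (fun t => g₁ (s t) * χ₁ t + g₂ (s t) * χ₂ t) (Ioo 0 r) := by
  have hcont : ContinuousOn (fun t => g₁ (s t) * χ₁ t + g₂ (s t) * χ₂ t
      - (g₁ (s t) * x₁ t + g₂ (s t) * x₂ t)) (Icc 0 r) :=
    ((hg₁.mul hχ.continuousOn_x₁).add (hg₂.mul hχ.continuousOn_x₂)).sub
      ((hg₁.mul hx.continuousOn_x₁).add (hg₂.mul hx.continuousOn_x₂))
  refine fun t ht => (sub_eq_zero.1 (eqOn_zero_of_integral_eq_zero hcont (fun t ht => ?_) ht)).symm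
  have hsplit := intervalIntegral.integral_sub
    ((hx.integrableOn_substrate_rate hD hg₁ hg₂).intervalIntegrable_of_mem_Icc ht)
    ((hχ.integrableOn_substrate_rate hD hg₁ hg₂).intervalIntegrable_of_mem_Icc ht)
  refine (intervalIntegral.integral_congr fun τ _ => ?_).trans (hsplit.trans ?_)
  · ring
  · linarith [hx.s_eq t ht, hχ.s_eq t ht]

theorem exists_div_eq_of_initial_ne (hx : IsChemostatSolution μ₁ μ₂ g₁ g₂ b₁ b₂ sIn D r x₁ x₂ s)
    (hχ : IsChemostatSolution μ₁ μ₂ g₁ g₂ b₁ b₂ sIn D r χ₁ χ₂ s) {M : ℝ} (hr : 0 < r)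
    (hD : Measurable D) (hDM : ∀ t ∈ Icc 0 r, |D t| ≤ M) (hDint : IntegrableOn D (Icc 0 r))
    (hμ₁ : ContinuousOn (fun τ => μ₁ (s τ)) (Icc 0 r))
    (hμ₂ : ContinuousOn (fun τ => μ₂ (s τ)) (Icc 0 r))
    (hg₁ : ContinuousOn (fun τ => g₁ (s τ)) (Icc 0 r))
    (hg₂ : ContinuousOn (fun τ => g₂ (s τ)) (Icc 0 r)) (hg₂pos : ∀ t ∈ Icc 0 r, 0 < g₂ (s t))
    (hχ₁pos : ∀ t ∈ Icc 0 r, 0 < χ₁ t) (hχ₂pos : ∀ t ∈ Icc 0 r, 0 < χ₂ t)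
    (hne : (x₁ 0, x₂ 0) ≠ (χ₁ 0, χ₂ 0)) :
    ∃ K, ∀ t ∈ Ioo 0 r, g₁ (s t) * χ₁ t / (g₂ (s t) * χ₂ t) = K := by
  have h0 : (0:ℝ) ∈ Icc 0 r := left_mem_Icc.2 hr.le
  have hx₁ := eqOn_const_mul_of_eq_integral_growth hμ₁ hD hDM hx.continuousOn_x₁
    hχ.continuousOn_x₁ (div_mul_cancel₀ _ (hχ₁pos 0 h0).ne').symm hx.x₁_eq hχ.x₁_eq
  have hx₂ := eqOn_const_mul_of_eq_integral_growth hμ₂ hD hDM hx.continuousOn_x₂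
    hχ.continuousOn_x₂ (div_mul_cancel₀ _ (hχ₂pos 0 h0).ne').symm hx.x₂_eq hχ.x₂_eq
  refine exists_div_eq_of_mul_sub_one_eq (α := x₁ 0 / χ₁ 0) (β := x₂ 0 / χ₂ 0) (nonempty_Ioo.2 hr)
    (fun t ht => (mul_pos (hg₂pos t (Ioo_subset_Icc_self ht))
      (hχ₂pos t (Ioo_subset_Icc_self ht))).ne')
    ?_ fun t ht => ?_
  · by_contra! h
    exact hne (Prod.ext ((div_eq_one_iff_eq (hχ₁pos 0 h0).ne').1 h.1)
      ((div_eq_one_iff_eq (hχ₂pos 0 h0).ne').1 h.2))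
  · have := hx.consumption_eqOn hχ hDint hg₁ hg₂ ht
    simp only [hx₁ (Ioo_subset_Icc_self ht), hx₂ (Ioo_subset_Icc_self ht)] at this
    linear_combination this

theorem ae_deriv_log_div_mul_substrate_rate_eq
    (hχ : IsChemostatSolution μ₁ μ₂ g₁ g₂ b₁ b₂ sIn D r χ₁ χ₂ s)
    (hDint : IntegrableOn D (Icc 0 r)) (hμ₁ : ContinuousOn (fun τ => μ₁ (s τ)) (Icc 0 r))
    (hμ₂ : ContinuousOn (fun τ => μ₂ (s τ)) (Icc 0 r))
    (hg₁C : ContDiffOn ℝ 1 g₁ (Ici 0)) (hg₂C : ContDiffOn ℝ 1 g₂ (Ici 0))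
    (hs : ∀ t ∈ Icc 0 r, 0 < s t) (hg₁pos : ∀ u > (0:ℝ), 0 < g₁ u) (hg₂pos : ∀ u > (0:ℝ), 0 < g₂ u)
    (hχ₁pos : ∀ t ∈ Icc 0 r, 0 < χ₁ t) (hχ₂pos : ∀ t ∈ Icc 0 r, 0 < χ₂ t) {K : ℝ}
    (hK : ∀ t ∈ Ioo 0 r, g₁ (s t) * χ₁ t / (g₂ (s t) * χ₂ t) = K) :
    ∀ᵐ t, t ∈ Ioo 0 r → deriv (fun v => log (g₁ v / g₂ v)) (s t) *
      (D t * (sIn - s t) - g₁ (s t) * χ₁ t - g₂ (s t) * χ₂ t) = μ₂ (s t) - μ₁ (s t) + b₁ - b₂ := by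
  have hsI : MapsTo s (Icc 0 r) (Ici 0) := fun t ht => (hs t ht).le
  have hg₁ := hg₁C.continuousOn.comp hχ.continuousOn_s hsI
  have hg₂ := hg₂C.continuousOn.comp hχ.continuousOn_s hsI
  have hlog : ∀ t ∈ Ioo 0 r, HasDerivAt (fun v => log (g₁ v / g₂ v))
      (deriv (fun v => log (g₁ v / g₂ v)) (s t)) (s t) := fun t ht => by
    have hst := hs t (Ioo_subset_Icc_self ht)
    have hd₁ := (hg₁C.contDiffAt (Ici_mem_nhds hst)).differentiableAt one_ne_zero
    have hd₂ := (hg₂C.contDiffAt (Ici_mem_nhds hst)).differentiableAt one_ne_zero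
    exact ((hd₁.div hd₂ (hg₂pos _ hst).ne').log
      (div_ne_zero (hg₁pos _ hst).ne' (hg₂pos _ hst).ne')).hasDerivAt
  have hrate := ae_mul_eq_sub_of_div_eq_const (k₁ := fun t => μ₁ (s t) - D t - b₁)
    (k₂ := fun t => μ₂ (s t) - D t - b₂) isOpen_Ioo hlog
    (ae_hasDerivAt_of_eq_integral (hχ.integrableOn_substrate_rate hDint hg₁ hg₂) hχ.s_eq)
    (ae_hasDerivAt_of_eq_integral
      (integrableOn_growth_rate_mul hμ₁ hDint hχ.continuousOn_x₁) hχ.x₁_eq)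
    (ae_hasDerivAt_of_eq_integral
      (integrableOn_growth_rate_mul hμ₂ hDint hχ.continuousOn_x₂) hχ.x₂_eq)
    (fun t ht => hg₁pos _ (hs t (Ioo_subset_Icc_self ht)))
    (fun t ht => hg₂pos _ (hs t (Ioo_subset_Icc_self ht)))
    (fun t ht => hχ₁pos t (Ioo_subset_Icc_self ht)) (fun t ht => hχ₂pos t (Ioo_subset_Icc_self ht))
    hK
  filter_upwards [hrate] with t h ht
  rw [h ht]
  ring

end IsChemostatSolution

theorem two_species_chemostat_strongly_observable_A1_A2_general
    (μ₁ μ₂ g₁ g₂ : ℝ → ℝ)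
    (hμ₁C : ContDiffOn ℝ 1 μ₁ (Ici 0)) (hμ₂C : ContDiffOn ℝ 1 μ₂ (Ici 0))
    (hg₁C : ContDiffOn ℝ 1 g₁ (Ici 0)) (hg₂C : ContDiffOn ℝ 1 g₂ (Ici 0))
    (hg₁pos : ∀ u > (0:ℝ), 0 < g₁ u) (hg₂pos : ∀ u > (0:ℝ), 0 < g₂ u)
    (b₁ b₂ : ℝ)
    (sIn : ℝ) (hsIn : 0 < sIn)
    (κ : ℝ → ℝ)
    (hκ : ∀ u : ℝ, κ u = deriv (fun v => Real.log (g₁ v / g₂ v)) u)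
    (c : ℝ) (hc : 0 < c)
    (hA : (∀ u ∈ Ioo 0 sIn, κ u ≠ 0 ∧ (μ₂ u - μ₁ u + b₁ - b₂) / κ u ≤ -c) ∨
          (∀ u ∈ Ioo 0 sIn, κ u ≠ 0 ∧ c ≤ (μ₂ u - μ₁ u + b₁ - b₂) / κ u))
    (r : ℝ) (hr : c⁻¹ * sIn ≤ r)
    (D : ℝ → ℝ) (hDmeas : Measurable D)
    (hDnn : ∀ t ∈ Icc 0 r, 0 ≤ D t) (hDbdd : ∃ M, ∀ t ∈ Icc 0 r, D t ≤ M)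
    (x₁ x₂ s χ₁ χ₂ σ : ℝ → ℝ)
    (hx₁C : ContinuousOn x₁ (Icc 0 r)) (hx₂C : ContinuousOn x₂ (Icc 0 r))
    (hsC : ContinuousOn s (Icc 0 r))
    (hχ₁C : ContinuousOn χ₁ (Icc 0 r)) (hχ₂C : ContinuousOn χ₂ (Icc 0 r))
    (hsmem : ∀ t ∈ Icc 0 r, s t ∈ Ioo 0 sIn)
    (hχ₁pos : ∀ t ∈ Icc 0 r, 0 < χ₁ t) (hχ₂pos : ∀ t ∈ Icc 0 r, 0 < χ₂ t)
    (hx₁eq : ∀ t ∈ Icc 0 r,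
      x₁ t = x₁ 0 + ∫ τ in (0:ℝ)..t, (μ₁ (s τ) - D τ - b₁) * x₁ τ)
    (hx₂eq : ∀ t ∈ Icc 0 r,
      x₂ t = x₂ 0 + ∫ τ in (0:ℝ)..t, (μ₂ (s τ) - D τ - b₂) * x₂ τ)
    (hseq : ∀ t ∈ Icc 0 r,
      s t = s 0 + ∫ τ in (0:ℝ)..t,
        (D τ * (sIn - s τ) - g₁ (s τ) * x₁ τ - g₂ (s τ) * x₂ τ))
    (hχ₁eq : ∀ t ∈ Icc 0 r,
      χ₁ t = χ₁ 0 + ∫ τ in (0:ℝ)..t, (μ₁ (σ τ) - D τ - b₁) * χ₁ τ)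
    (hχ₂eq : ∀ t ∈ Icc 0 r,
      χ₂ t = χ₂ 0 + ∫ τ in (0:ℝ)..t, (μ₂ (σ τ) - D τ - b₂) * χ₂ τ)
    (hσeq : ∀ t ∈ Icc 0 r,
      σ t = σ 0 + ∫ τ in (0:ℝ)..t,
        (D τ * (sIn - σ τ) - g₁ (σ τ) * χ₁ τ - g₂ (σ τ) * χ₂ τ))
    (hout : ∀ t ∈ Icc 0 r, s t = σ t) :
    (x₁ 0, x₂ 0) = (χ₁ 0, χ₂ 0) := by
  by_contra hne
  have hr₀ : 0 < r := (mul_pos (inv_pos.2 hc) hsIn).trans_le hr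
  have hcomp : ∀ φ : ℝ → ℝ, ContDiffOn ℝ 1 φ (Ici 0) → ContinuousOn (fun τ => φ (s τ)) (Icc 0 r) :=
    fun φ hφ => hφ.continuousOn.comp hsC fun t ht => (hsmem t ht).1.le
  obtain ⟨M, hM⟩ := hDbdd
  have hDM : ∀ t ∈ Icc 0 r, |D t| ≤ M := fun t ht =>
    abs_le.2 ⟨by linarith [hDnn t ht, hM t ht], hM t ht⟩
  have hDint := integrableOn_Icc_of_abs_le hDmeas.aestronglyMeasurable hDM
  have hx : IsChemostatSolution μ₁ μ₂ g₁ g₂ b₁ b₂ sIn D r x₁ x₂ s :=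
    ⟨hx₁C, hx₂C, hsC, hx₁eq, hx₂eq, hseq⟩
  have hχ := IsChemostatSolution.of_eqOn_substrate hχ₁C hχ₂C hsC hχ₁eq hχ₂eq hσeq hout
  obtain ⟨K, hK⟩ := hx.exists_div_eq_of_initial_ne hχ hr₀ hDmeas hDM hDint
    (hcomp _ hμ₁C) (hcomp _ hμ₂C) (hcomp _ hg₁C) (hcomp _ hg₂C)
    (fun t ht => hg₂pos _ (hsmem t ht).1) hχ₁pos hχ₂pos hne
  have hrate : ∀ᵐ t, t ∈ Ioo 0 r → D t * (sIn - s t) - g₁ (s t) * χ₁ t - g₂ (s t) * χ₂ t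
      = (μ₂ (s t) - μ₁ (s t) + b₁ - b₂) / κ (s t) := by
    filter_upwards [hχ.ae_deriv_log_div_mul_substrate_rate_eq hDint (hcomp _ hμ₁C)
      (hcomp _ hμ₂C) hg₁C hg₂C (fun t ht => (hsmem t ht).1) hg₁pos hg₂pos hχ₁pos hχ₂pos hK]
      with t h ht
    have hs := hsmem t (Ioo_subset_Icc_self ht)
    rw [eq_div_iff (hA.elim (fun h => (h _ hs).1) fun h => (h _ hs).1), mul_comm, hκ, h ht]
  have hrIcc : r ∈ Icc 0 r := right_mem_Icc.2 hr₀.le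
  have hint := hχ.integrableOn_substrate_rate hDint (hcomp _ hg₁C) (hcomp _ hg₂C)
  have hdrift := mul_sub_le_abs_sub_of_eq_integral hr₀.le
    (hint.intervalIntegrable_of_mem_Icc hrIcc) (hχ.s_eq r hrIcc)
    (hA.imp (fun h => hrate.mono fun t ht hmem =>
        (ht hmem).trans_le (h _ (hsmem t (Ioo_subset_Icc_self hmem))).2)
      fun h => hrate.mono fun t ht hmem =>
        (h _ (hsmem t (Ioo_subset_Icc_self hmem))).2.trans_eq (ht hmem).symm)
  have hs₀ := hsmem 0 (left_mem_Icc.2 hr₀.le)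
  have hsr := hsmem r hrIcc
  have hconfined : |s r - s 0| < sIn :=
    abs_sub_lt_iff.2 ⟨by linarith [hs₀.1, hsr.2], by linarith [hs₀.2, hsr.1]⟩
  linarith [(inv_mul_le_iff₀ hc).1 hr]

/-- Theorem 3.8: under condition (A1) or (A2), the two-species chemostat with constant inlet
concentration `s_in` and substrate constrained to `(0, s_in)` is strongly observable in any
time `r ≥ c⁻¹ s_in`. -/
theorem two_species_chemostat_strongly_observable_A1_A2
    (μ₁ μ₂ g₁ g₂ : ℝ → ℝ)
    (hμ₁C : ContDiffOn ℝ 1 μ₁ (Ici 0)) (hμ₂C : ContDiffOn ℝ 1 μ₂ (Ici 0))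
    (hg₁C : ContDiffOn ℝ 1 g₁ (Ici 0)) (hg₂C : ContDiffOn ℝ 1 g₂ (Ici 0))
    (hμ₁bdd : ∃ M, ∀ u ≥ (0:ℝ), μ₁ u ≤ M) (hμ₂bdd : ∃ M, ∀ u ≥ (0:ℝ), μ₂ u ≤ M)
    (hg₁bdd : ∃ M, ∀ u ≥ (0:ℝ), g₁ u ≤ M) (hg₂bdd : ∃ M, ∀ u ≥ (0:ℝ), g₂ u ≤ M)
    (hμ₁0 : μ₁ 0 = 0) (hμ₂0 : μ₂ 0 = 0) (hg₁0 : g₁ 0 = 0) (hg₂0 : g₂ 0 = 0)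
    (hμ₁pos : ∀ u > (0:ℝ), 0 < μ₁ u) (hμ₂pos : ∀ u > (0:ℝ), 0 < μ₂ u)
    (hg₁pos : ∀ u > (0:ℝ), 0 < g₁ u) (hg₂pos : ∀ u > (0:ℝ), 0 < g₂ u)
    (b₁ b₂ : ℝ) (hb₁ : 0 ≤ b₁) (hb₂ : 0 ≤ b₂)
    (sIn : ℝ) (hsIn : 0 < sIn)
    (κ : ℝ → ℝ)
    (hκ : ∀ u : ℝ, κ u = deriv (fun v => Real.log (g₁ v / g₂ v)) u)
    (c : ℝ) (hc : 0 < c)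
    (hA : (∀ u ∈ Ioo 0 sIn, κ u ≠ 0 ∧ (μ₂ u - μ₁ u + b₁ - b₂) / κ u ≤ -c) ∨
          (∀ u ∈ Ioo 0 sIn, κ u ≠ 0 ∧ c ≤ (μ₂ u - μ₁ u + b₁ - b₂) / κ u))
    (r : ℝ) (hr : c⁻¹ * sIn ≤ r)
    (D : ℝ → ℝ) (hDmeas : Measurable D)
    (hDnn : ∀ t ∈ Icc 0 r, 0 ≤ D t) (hDbdd : ∃ M, ∀ t ∈ Icc 0 r, D t ≤ M)
    (x₁ x₂ s χ₁ χ₂ σ : ℝ → ℝ)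
    (hx₁C : ContinuousOn x₁ (Icc 0 r)) (hx₂C : ContinuousOn x₂ (Icc 0 r))
    (hsC : ContinuousOn s (Icc 0 r))
    (hχ₁C : ContinuousOn χ₁ (Icc 0 r)) (hχ₂C : ContinuousOn χ₂ (Icc 0 r))
    (hσC : ContinuousOn σ (Icc 0 r))
    (hx₁pos : ∀ t ∈ Icc 0 r, 0 < x₁ t) (hx₂pos : ∀ t ∈ Icc 0 r, 0 < x₂ t)
    (hsmem : ∀ t ∈ Icc 0 r, s t ∈ Ioo 0 sIn)
    (hχ₁pos : ∀ t ∈ Icc 0 r, 0 < χ₁ t) (hχ₂pos : ∀ t ∈ Icc 0 r, 0 < χ₂ t)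
    (hσmem : ∀ t ∈ Icc 0 r, σ t ∈ Ioo 0 sIn)
    (hx₁eq : ∀ t ∈ Icc 0 r,
      x₁ t = x₁ 0 + ∫ τ in (0:ℝ)..t, (μ₁ (s τ) - D τ - b₁) * x₁ τ)
    (hx₂eq : ∀ t ∈ Icc 0 r,
      x₂ t = x₂ 0 + ∫ τ in (0:ℝ)..t, (μ₂ (s τ) - D τ - b₂) * x₂ τ)
    (hseq : ∀ t ∈ Icc 0 r,
      s t = s 0 + ∫ τ in (0:ℝ)..t,
        (D τ * (sIn - s τ) - g₁ (s τ) * x₁ τ - g₂ (s τ) * x₂ τ))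
    (hχ₁eq : ∀ t ∈ Icc 0 r,
      χ₁ t = χ₁ 0 + ∫ τ in (0:ℝ)..t, (μ₁ (σ τ) - D τ - b₁) * χ₁ τ)
    (hχ₂eq : ∀ t ∈ Icc 0 r,
      χ₂ t = χ₂ 0 + ∫ τ in (0:ℝ)..t, (μ₂ (σ τ) - D τ - b₂) * χ₂ τ)
    (hσeq : ∀ t ∈ Icc 0 r,
      σ t = σ 0 + ∫ τ in (0:ℝ)..t,
        (D τ * (sIn - σ τ) - g₁ (σ τ) * χ₁ τ - g₂ (σ τ) * χ₂ τ))
    (hout : ∀ t ∈ Icc 0 r, s t = σ t) :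
    (x₁ 0, x₂ 0) = (χ₁ 0, χ₂ 0) :=
  two_species_chemostat_strongly_observable_A1_A2_general μ₁ μ₂ g₁ g₂ hμ₁C hμ₂C hg₁C hg₂C hg₁pos
    hg₂pos b₁ b₂ sIn hsIn κ hκ c hc hA r hr D hDmeas hDnn hDbdd x₁ x₂ s χ₁ χ₂ σ hx₁C hx₂C hsC hχ₁C
    hχ₂C hsmem hχ₁pos hχ₂pos hx₁eq hx₂eq hseq hχ₁eq hχ₂eq hσeq hout
end
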